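/- arXiv:1308.2026 — 6 statements merged into one kernel-verified Lean document; each statement's English description precedes it below -/
import Mathlib

section
/- If A(t) = t^p log(e+t)^(p-1+δ) with 1 < p < ∞ and δ > 0, then the Young function \bar{A}(t) = sup_{s>0} (st - A(s)) satisfies the B_{p'} integrability condition: ∫_1^∞ \bar{A}(t)/t^{p'} · dt/t < ∞, where p' = p/(p-1). -/
open MeasureTheory Real Set Filter

/-- The normalized Luxemburg (Orlicz) norm of `v` over the set `E`:
`inf { λ > 0 : μ(E)⁻¹ ∫_E A(|v|/λ) dμ ≤ 1 }`. -/
noncomputable def luxNorm {X : Type*} [MeasurableSpace X] (μ : Measure X)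
    (A : ℝ → ℝ) (E : Set X) (v : X → ℝ) : ℝ :=
  sInf {l : ℝ | 0 < l ∧ ∫⁻ x in E, ENNReal.ofReal (A (|v x| / l)) ∂μ ≤ μ E}

/-- A Young function: continuous, convex, increasing on `[0,∞)`, vanishing at `0`,
with superlinear growth at infinity. -/
def IsYoung (A : ℝ → ℝ) : Prop :=
  ContinuousOn A (Set.Ici 0) ∧ ConvexOn ℝ (Set.Ici 0) A ∧ MonotoneOn A (Set.Ici 0) ∧
    A 0 = 0 ∧ Filter.Tendsto (fun t => A t / t) Filter.atTop Filter.atTop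

/-!
Write `β = (p - 1 + δ) / (p - 1)` and let `t` be large. A competitor `s ≤ t^{1/(p-1)} / (log t)^β`
gives `st - A(s) ≤ st ≤ t^{p'} / (log t)^β`. A larger `s` has `log (e + s) ≥ log t / (2 (p - 1))`,
so `A(s) ≥ c (log t)^{p-1+δ} s^p`, and Young's inequality with this weight again gives
`st - A(s) ≲ t^{p'} / (log t)^β`. Hence `Ā(t) / t^{p'} / t ≲ 1 / (t (log t)^β)`, which is
integrable at infinity because `β > 1`, while near `1` the integrand is bounded because
`0 ≤ Ā(t) ≤ t^{p'}`.
-/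

open Topology

lemma mul_sub_mul_rpow_le {p K s t : ℝ} (hp : 1 < p) (hK : 0 < K) (hs : 0 ≤ s) (ht : 0 ≤ t) :
    s * t - K * s ^ p ≤ K ^ (-(p - 1)⁻¹) * t ^ (p / (p - 1)) := by
  have hpq := Real.HolderConjugate.conjExponent hp
  have hp0 : p ≠ 0 := by positivity
  have hp1 : p - 1 ≠ 0 := by linarith
  -- Young's inequality for `a = K^{1/p} s` and `b = K^{-1/p} t`
  have hy := Real.young_inequality_of_nonneg (mul_nonneg (rpow_nonneg hK.le p⁻¹) hs)
    (mul_nonneg (rpow_nonneg hK.le (-p⁻¹)) ht) hpq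
  have hab : K ^ p⁻¹ * s * (K ^ (-p⁻¹) * t) = s * t := by
    rw [mul_mul_mul_comm, ← rpow_add hK, add_neg_cancel, rpow_zero, one_mul]
  have ha : (K ^ p⁻¹ * s) ^ p = K * s ^ p := by
    rw [mul_rpow (rpow_nonneg hK.le _) hs, ← rpow_mul hK.le, inv_mul_cancel₀ hp0, rpow_one]
  have hb : (K ^ (-p⁻¹) * t) ^ conjExponent p = K ^ (-(p - 1)⁻¹) * t ^ (p / (p - 1)) := by
    rw [mul_rpow (rpow_nonneg hK.le _) ht, ← rpow_mul hK.le, conjExponent]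
    congr 2
    field_simp
  rw [hab, ha, hb] at hy
  have h1 : K * s ^ p / p ≤ K * s ^ p := div_le_self (by positivity) hp.le
  have h2 := div_le_self (by positivity : 0 ≤ K ^ (-(p - 1)⁻¹) * t ^ (p / (p - 1)))
    hpq.symm.lt.le
  linarith

lemma integrableOn_Ioi_inv_mul_log_rpow_neg {a β : ℝ} (ha : 1 < a) (hβ : 1 < β) :
    IntegrableOn (fun t => t⁻¹ * log t ^ (-β)) (Ioi a) := by
  have hderiv : ∀ t ∈ Ici a,
      HasDerivAt (fun t => -(β - 1)⁻¹ * log t ^ (-(β - 1))) (t⁻¹ * log t ^ (-β)) t := by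
    intro t ht
    have ht0 : t ≠ 0 := by linarith [mem_Ici.1 ht]
    have hlog : log t ≠ 0 := (log_pos (by linarith [mem_Ici.1 ht])).ne'
    refine (((hasDerivAt_log ht0).rpow_const (Or.inl hlog)).const_mul (-(β - 1)⁻¹)).congr_deriv ?_
    rw [show -(β - 1) - 1 = -β by ring]
    field_simp [show β - 1 ≠ 0 by linarith]
  have hlim : Tendsto (fun t => -(β - 1)⁻¹ * log t ^ (-(β - 1))) atTop (𝓝 0) := by
    have := ((tendsto_rpow_neg_atTop (by linarith : 0 < β - 1)).comp tendsto_log_atTop).const_mul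
      (-(β - 1)⁻¹)
    rwa [mul_zero] at this
  refine integrableOn_Ioi_deriv_of_nonneg' hderiv (fun t ht => ?_) hlim
  have ht1 : 1 < t := ha.trans ht
  have := log_pos ht1
  positivity

lemma integrableOn_Ioi_of_norm_le_of_integrableOn_Ioi {E : Type*} [NormedAddCommGroup E]
    {f : ℝ → E} {a b M : ℝ} (hf : AEStronglyMeasurable f (volume.restrict (Ioi a)))
    (hM : ∀ t ∈ Ioc a b, ‖f t‖ ≤ M) (hb : IntegrableOn f (Ioi b)) : IntegrableOn f (Ioi a) := by
  refine (IntegrableOn.union ?_ hb).mono_set Ioi_subset_Ioc_union_Ioi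
  exact (integrableOn_const (C := M) measure_Ioc_lt_top.ne).mono'
    (hf.mono_set Ioc_subset_Ioi_self) ((ae_restrict_iff' measurableSet_Ioc).2 (ae_of_all _ hM))

noncomputable def youngConj (A : ℝ → ℝ) (t : ℝ) : ℝ :=
  sSup {y : ℝ | ∃ s : ℝ, 0 < s ∧ y = s * t - A s}

section YoungConj

variable {A B : ℝ → ℝ} {s t t' M : ℝ}

lemma youngConj_congr (h : EqOn A B (Ioi 0)) : youngConj A = youngConj B := by
  ext t
  refine congrArg sSup (Set.ext fun y => exists_congr fun s => and_congr_right fun hs => ?_)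
  rw [h hs]

lemma youngConj_le (h : ∀ s, 0 < s → s * t - A s ≤ M) : youngConj A t ≤ M :=
  csSup_le ⟨_, 1, one_pos, rfl⟩ (by rintro _ ⟨s, hs, rfl⟩; exact h s hs)

lemma le_youngConj (hM : ∀ s, 0 < s → s * t - A s ≤ M) (hs : 0 < s) :
    s * t - A s ≤ youngConj A t :=
  le_csSup ⟨M, by rintro _ ⟨s, hs, rfl⟩; exact hM s hs⟩ ⟨s, hs, rfl⟩

lemma youngConj_nonneg (hM : ∀ s, 0 < s → s * t - A s ≤ M)
    (hA : Tendsto A (𝓝[>] 0) (𝓝 0)) : 0 ≤ youngConj A t := by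
  have hlim : Tendsto (fun s => s * t - A s) (𝓝[>] 0) (𝓝 (0 * t - 0)) :=
    (tendsto_nhdsWithin_of_tendsto_nhds (continuous_id.mul continuous_const).continuousAt).sub hA
  rw [zero_mul, sub_zero] at hlim
  exact le_of_tendsto hlim (eventually_mem_nhdsWithin.mono fun s hs => le_youngConj hM hs)

lemma youngConj_mono (hM : ∀ s, 0 < s → s * t' - A s ≤ M) (htt' : t ≤ t') :
    youngConj A t ≤ youngConj A t' :=
  youngConj_le fun _ hs =>
    (sub_le_sub_right (mul_le_mul_of_nonneg_left htt' hs.le) _).trans (le_youngConj hM hs)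

end YoungConj

noncomputable def logBump (p α s : ℝ) : ℝ := s ^ p * log (exp 1 + s) ^ α

section LogBump

variable {p α c s t : ℝ}

lemma one_le_log_exp_one_add (hs : 0 ≤ s) : 1 ≤ log (exp 1 + s) := by
  rw [le_log_iff_exp_le (by positivity)]
  linarith

lemma logBump_nonneg (hs : 0 ≤ s) : 0 ≤ logBump p α s := by
  have := one_le_log_exp_one_add hs
  unfold logBump
  positivity

lemma tendsto_logBump_nhdsGT_zero (hp : 0 < p) : Tendsto (logBump p α) (𝓝[>] 0) (𝓝 0) := by
  have hcont : ContinuousAt (logBump p α) 0 :=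
    (continuousAt_id.rpow_const (Or.inr hp.le)).mul
      (((continuousAt_const.add continuousAt_id).log (by simp [(exp_pos 1).ne'])).rpow_const
        (Or.inl (by simp)))
  have h0 : logBump p α 0 = 0 := by simp [logBump, zero_rpow hp.ne']
  simpa only [h0] using hcont.tendsto.mono_left nhdsWithin_le_nhds

lemma mul_sub_logBump_le_of_le_log (hp : 1 < p) (hα : 0 ≤ α) (hc : 0 < c)
    (hcs : c ≤ log (exp 1 + s)) (hs : 0 ≤ s) (ht : 0 ≤ t) :
    s * t - logBump p α s ≤ c ^ (-(α / (p - 1))) * t ^ (p / (p - 1)) := by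
  have hA : c ^ α * s ^ p ≤ logBump p α s := by
    rw [logBump, mul_comm]
    gcongr
  calc s * t - logBump p α s ≤ s * t - c ^ α * s ^ p := by linarith
    _ ≤ (c ^ α) ^ (-(p - 1)⁻¹) * t ^ (p / (p - 1)) :=
      mul_sub_mul_rpow_le hp (rpow_pos_of_pos hc α) hs ht
    _ = c ^ (-(α / (p - 1))) * t ^ (p / (p - 1)) := by
      rw [← rpow_mul hc.le, mul_neg, ← div_eq_mul_inv]

lemma mul_sub_logBump_le_rpow (hp : 1 < p) (hα : 0 ≤ α) (hs : 0 ≤ s) (ht : 0 ≤ t) :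
    s * t - logBump p α s ≤ t ^ (p / (p - 1)) := by
  simpa using mul_sub_logBump_le_of_le_log hp hα one_pos (one_le_log_exp_one_add hs) hs ht

lemma youngConj_logBump_nonneg (hp : 1 < p) (hα : 0 ≤ α) (ht : 0 ≤ t) :
    0 ≤ youngConj (logBump p α) t :=
  youngConj_nonneg (fun _ hs => mul_sub_logBump_le_rpow hp hα hs.le ht)
    (tendsto_logBump_nhdsGT_zero (by linarith))

lemma youngConj_logBump_le_rpow (hp : 1 < p) (hα : 0 ≤ α) (ht : 0 ≤ t) :
    youngConj (logBump p α) t ≤ t ^ (p / (p - 1)) :=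
  youngConj_le fun _ hs => mul_sub_logBump_le_rpow hp hα hs.le ht

lemma monotoneOn_youngConj_logBump (hp : 1 < p) (hα : 0 ≤ α) :
    MonotoneOn (youngConj (logBump p α)) (Ici 0) := fun _ _ _ ht' htt' =>
  youngConj_mono (fun _ hs => mul_sub_logBump_le_rpow hp hα hs.le ht') htt'

lemma mul_sub_logBump_le (hp : 1 < p) (hα : 0 ≤ α) (ht : 1 < t)
    (hlog : log t ^ (α / (p - 1)) ≤ t ^ ((p - 1)⁻¹ / 2)) (hs : 0 < s) :
    s * t - logBump p α s ≤
      max 1 ((2 * (p - 1)) ^ (α / (p - 1))) * t ^ (p / (p - 1)) / log t ^ (α / (p - 1)) := by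
  set r := (p - 1)⁻¹
  set β := α / (p - 1)
  set C := max 1 ((2 * (p - 1)) ^ β)
  have hp1 : 0 < p - 1 := by linarith
  have ht0 : 0 < t := by linarith
  have hM : 0 < log t := log_pos ht
  rcases le_or_gt s (t ^ r / log t ^ β) with hsmall | hlarge
  · calc s * t - logBump p α s ≤ s * t := sub_le_self _ (logBump_nonneg hs.le)
      _ ≤ t ^ r / log t ^ β * t := by gcongr
      _ = 1 * t ^ (p / (p - 1)) / log t ^ β := by
        rw [div_mul_eq_mul_div, ← rpow_add_one ht0.ne', one_mul]
        congr 2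
        simp only [r]
        field_simp
        ring
      _ ≤ C * t ^ (p / (p - 1)) / log t ^ β := by gcongr; exact le_max_left _ _
  · have hthreshold : t ^ (r / 2) ≤ t ^ r / log t ^ β := by
      calc t ^ (r / 2) = t ^ r / t ^ (r / 2) := by rw [← rpow_sub ht0]; ring_nf
        _ ≤ t ^ r / log t ^ β := by gcongr
    have hlogs : log t / (2 * (p - 1)) ≤ log (exp 1 + s) :=
      calc log t / (2 * (p - 1)) = log (t ^ (r / 2)) := by
            rw [log_rpow ht0]; simp only [r]; field_simp
        _ ≤ log s := log_le_log (by positivity) (hthreshold.trans hlarge.le)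
        _ ≤ log (exp 1 + s) := log_le_log hs (by linarith [exp_pos 1])
    calc s * t - logBump p α s ≤ (log t / (2 * (p - 1))) ^ (-β) * t ^ (p / (p - 1)) :=
          mul_sub_logBump_le_of_le_log hp hα (by positivity) hlogs hs.le ht0.le
      _ = (2 * (p - 1)) ^ β * t ^ (p / (p - 1)) / log t ^ β := by
        rw [rpow_neg (by positivity), div_rpow hM.le (by positivity), inv_div]
        ring
      _ ≤ C * t ^ (p / (p - 1)) / log t ^ β := by gcongr; exact le_max_right _ _

lemma eventually_youngConj_logBump_le (hp : 1 < p) (hα : 0 ≤ α) : ∃ C, ∀ᶠ t in atTop,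
    youngConj (logBump p α) t ≤ C * t ^ (p / (p - 1)) / log t ^ (α / (p - 1)) := by
  have hlog : ∀ᶠ t in atTop, log t ^ (α / (p - 1)) ≤ t ^ ((p - 1)⁻¹ / 2) := by
    have hr : 0 < (p - 1)⁻¹ / 2 := by
      have : 0 < p - 1 := by linarith
      positivity
    filter_upwards [(isLittleO_log_rpow_rpow_atTop (α / (p - 1)) hr).eventuallyLE,
      eventually_ge_atTop 1] with t h ht
    rwa [norm_of_nonneg (rpow_nonneg (log_nonneg ht) _),
      norm_of_nonneg (rpow_nonneg (by linarith) _)] at h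
  refine ⟨max 1 ((2 * (p - 1)) ^ (α / (p - 1))), ?_⟩
  filter_upwards [hlog, eventually_gt_atTop 1] with t hlog ht
  exact youngConj_le fun _ hs => mul_sub_logBump_le hp hα ht hlog hs

lemma norm_youngConj_logBump_div_le_one (hp : 1 < p) (hα : 0 ≤ α) {t : ℝ} (ht : 1 ≤ t) :
    ‖youngConj (logBump p α) t / t ^ (p / (p - 1)) / t‖ ≤ 1 := by
  have ht0 : 0 < t := by linarith
  have hY := youngConj_logBump_nonneg hp hα ht0.le
  rw [norm_of_nonneg (by positivity)]
  calc youngConj (logBump p α) t / t ^ (p / (p - 1)) / t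
      ≤ youngConj (logBump p α) t / t ^ (p / (p - 1)) := div_le_self (by positivity) ht
    _ ≤ 1 := div_le_one_of_le₀ (youngConj_logBump_le_rpow hp hα ht0.le) (by positivity)

theorem integrableOn_youngConj_logBump (hp : 1 < p) (hα : p - 1 < α) :
    IntegrableOn (fun t => youngConj (logBump p α) t / t ^ (p / (p - 1)) / t) (Ioi 1) := by
  have hα0 : 0 ≤ α := by linarith
  have hβ : 1 < α / (p - 1) := (one_lt_div (by linarith)).2 hα
  obtain ⟨C, hC⟩ := eventually_youngConj_logBump_le hp hα0
  obtain ⟨T, hT⟩ := (hC.and (eventually_gt_atTop 1)).exists_forall_of_atTop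
  have hT1 : 1 < T := (hT T le_rfl).2
  have hmeas : AEStronglyMeasurable (fun t => youngConj (logBump p α) t / t ^ (p / (p - 1)) / t)
      (volume.restrict (Ioi 1)) :=
    (((aemeasurable_restrict_of_monotoneOn measurableSet_Ioi
      ((monotoneOn_youngConj_logBump hp hα0).mono (Ioi_subset_Ici zero_le_one))).div
        (measurable_id.pow_const _).aemeasurable).div
          measurable_id.aemeasurable).aestronglyMeasurable
  refine integrableOn_Ioi_of_norm_le_of_integrableOn_Ioi hmeas
    (fun t ht => norm_youngConj_logBump_div_le_one hp hα0 ht.1.le) (b := T) ?_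
  refine ((integrableOn_Ioi_inv_mul_log_rpow_neg hT1 hβ).const_mul C).mono'
    (hmeas.mono_set (Ioi_subset_Ioi hT1.le))
    ((ae_restrict_iff' measurableSet_Ioi).2 (ae_of_all _ fun t ht => ?_))
  obtain ⟨hYt, ht1⟩ := hT t (le_of_lt ht)
  have ht0 : 0 < t := by linarith
  have hq : 0 < t ^ (p / (p - 1)) := by positivity
  rw [norm_of_nonneg (div_nonneg (div_nonneg (youngConj_logBump_nonneg hp hα0 ht0.le) hq.le)
    ht0.le), rpow_neg (log_nonneg ht1.le)]
  calc youngConj (logBump p α) t / t ^ (p / (p - 1)) / t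
      ≤ C * t ^ (p / (p - 1)) / log t ^ (α / (p - 1)) / t ^ (p / (p - 1)) / t := by gcongr
    _ = C * (t⁻¹ * (log t ^ (α / (p - 1)))⁻¹) := by field_simp

end LogBump

/-- If `A(t) = t^p log(e+t)^(p-1+δ)` with `1 < p` and `δ > 0`, then the complementary
Young function `Ā(t) = sup_{s>0} (st − A(s))` satisfies the `B_{p'}` condition. -/
theorem complementary_log_bump_in_Bp' (p δ : ℝ) (hp : 1 < p) (hδ : 0 < δ)
    (A Abar : ℝ → ℝ)
    (hA : ∀ t : ℝ, 0 ≤ t → A t = t ^ p * Real.log (Real.exp 1 + t) ^ (p - 1 + δ))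
    (hAbar : ∀ t : ℝ, 0 ≤ t →
      Abar t = sSup {y : ℝ | ∃ s : ℝ, 0 < s ∧ y = s * t - A s}) :
    MeasureTheory.IntegrableOn
      (fun t : ℝ => Abar t / t ^ (p / (p - 1)) / t) (Set.Ioi 1) := by
  have hA_eq : EqOn A (logBump p (p - 1 + δ)) (Ioi 0) := fun s hs => hA s (le_of_lt hs)
  have hAbar_eq : EqOn (youngConj (logBump p (p - 1 + δ))) Abar (Ioi 1) := fun t ht => by
    rw [hAbar t (by linarith [mem_Ioi.1 ht]), ← youngConj_congr hA_eq]
    rfl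
  exact (integrableOn_youngConj_logBump (α := p - 1 + δ) hp (by linarith)).congr_fun
    (fun t ht => by simp only [hAbar_eq ht]) measurableSet_Ioi
end

section
/- Let D be a dyadic grid on a measure space X (a collection of measurable 'cubes' such that any two are either disjoint or nested), and let S ⊆ D be a sparse family: there exist pairwise disjoint measurable sets E(Q) ⊆ Q with μ(Q) ≤ 2 μ(E(Q)) for each Q ∈ S. Then the sparse operator T^S f = Σ_{Q∈S} (μ(Q)^{-1} ∫_Q f dμ) χ_Q is bounded on L²(μ): ‖T^S f‖_{L²(μ)} ≤ C ‖f‖_{L²(μ)} for an absolute constant C, for all nonnegative f ∈ L²(μ). -/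
open MeasureTheory Real Set Filter

/-!
For `φ ≥ 0` pair `G = T^S φ` with itself. Since `μ Q ≤ 2 μ (E Q)` and the sets `E Q` are disjoint,
`∫ G² = ∑_Q ⨍_Q φ · ∫_Q G ≤ 2 ∑_Q ⨍_Q φ · ⨍_Q G · μ (E Q) ≤ 2 ∫ Mφ · MG`, with `M` the dyadic
maximal function. Cauchy–Schwarz and `‖M‖_{L²→L²} ≤ √8` then give `‖G‖₂² ≤ 16 ‖φ‖₂ ‖G‖₂`. The
bound for `M` comes from its weak-type estimate (select the maximal cubes with large average)
and the layer-cake formula. For finitely many cubes `‖G‖₂ < ∞`, so one may divide; monotone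
convergence passes to all of `S`, and the real operator is dominated by `T^S |f|`.
-/

open scoped ENNReal

section

variable {X : Type*}

theorem exists_pairwiseDisjoint_subset_forall_subset {F : Finset (Set X)}
    (hF : (F : Set (Set X)).Pairwise fun Q Q' => Disjoint Q Q' ∨ Q ⊆ Q' ∨ Q' ⊆ Q) :
    ∃ M ⊆ F, (M : Set (Set X)).PairwiseDisjoint id ∧ ∀ Q ∈ F, ∃ R ∈ M, Q ⊆ R := by
  classical
  refine ⟨F.filter (Maximal (· ∈ F)), Finset.filter_subset _ _, ?_, fun Q hQ => ?_⟩
  · intro R hR R' hR' hne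
    rw [Finset.coe_filter] at hR hR'
    rcases hF hR.1 hR'.1 hne with h | h | h
    · exact h
    · exact absurd (hR.2.eq_of_subset hR'.1 h) hne
    · exact absurd (hR'.2.eq_of_superset hR.1 h) hne
  · obtain ⟨R, hQR, hR⟩ := F.exists_le_maximal hQ
    exact ⟨R, Finset.mem_filter.2 ⟨hR.1, hR⟩, hQR⟩

variable [MeasurableSpace X] {μ : Measure X}

structure IsDyadicGrid (μ : Measure X) (D : Set (Set X)) : Prop where
  countable : D.Countable
  measurableSet : ∀ Q ∈ D, MeasurableSet Q
  measure_pos : ∀ Q ∈ D, 0 < μ Q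
  measure_lt_top : ∀ Q ∈ D, μ Q < ∞
  disjoint_or_subset : D.Pairwise fun Q Q' => Disjoint Q Q' ∨ Q ⊆ Q' ∨ Q' ⊆ Q

structure IsSparse (μ : Measure X) (S : Set (Set X)) (E : Set X → Set X) : Prop where
  subset : ∀ Q ∈ S, E Q ⊆ Q
  measurableSet : ∀ Q ∈ S, MeasurableSet (E Q)
  pairwiseDisjoint : S.PairwiseDisjoint E
  measure_le : ∀ Q ∈ S, μ Q ≤ 2 * μ (E Q)

theorem IsDyadicGrid.mono {D D' : Set (Set X)} (hD : IsDyadicGrid μ D) (h : D' ⊆ D) :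
    IsDyadicGrid μ D' where
  countable := hD.countable.mono h
  measurableSet Q hQ := hD.measurableSet Q (h hQ)
  measure_pos Q hQ := hD.measure_pos Q (h hQ)
  measure_lt_top Q hQ := hD.measure_lt_top Q (h hQ)
  disjoint_or_subset := hD.disjoint_or_subset.mono h

theorem IsSparse.mono {S S' : Set (Set X)} {E : Set X → Set X} (hS : IsSparse μ S E)
    (h : S' ⊆ S) : IsSparse μ S' E where
  subset Q hQ := hS.subset Q (h hQ)
  measurableSet Q hQ := hS.measurableSet Q (h hQ)
  pairwiseDisjoint := hS.pairwiseDisjoint.subset h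
  measure_le Q hQ := hS.measure_le Q (h hQ)

theorem ENNReal.le_sq_add_one (a : ℝ≥0∞) : a ≤ a ^ 2 + 1 := by
  rcases le_total a 1 with h | h
  · exact h.trans le_add_self
  · exact (le_mul_of_one_le_left' h).trans (by rw [sq]; exact le_self_add)

theorem setLIntegral_ne_top_of_lintegral_sq_ne_top {φ : X → ℝ≥0∞} {s : Set X} (hs : μ s ≠ ∞)
    (hφ : ∫⁻ x, φ x ^ 2 ∂μ ≠ ∞) : ∫⁻ x in s, φ x ∂μ ≠ ∞ := by
  refine ne_top_of_le_ne_top ?_ (lintegral_mono fun x => ENNReal.le_sq_add_one (φ x))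
  rw [lintegral_add_right _ measurable_const, setLIntegral_const, one_mul]
  exact ENNReal.add_ne_top.2 ⟨ne_top_of_le_ne_top hφ (setLIntegral_le_lintegral _ _), hs⟩

noncomputable def dyadicMaximal (μ : Measure X) (F : Finset (Set X)) (φ : X → ℝ≥0∞) (x : X) :
    ℝ≥0∞ :=
  ⨆ Q ∈ F, Q.indicator (fun _ => ⨍⁻ y in Q, φ y ∂μ) x

variable {F : Finset (Set X)} {φ : X → ℝ≥0∞}

theorem measurable_dyadicMaximal (hF : ∀ Q ∈ F, MeasurableSet Q) (φ : X → ℝ≥0∞) :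
    Measurable (dyadicMaximal μ F φ) :=
  Measurable.biSup _ F.countable_toSet fun Q hQ => measurable_const.indicator (hF Q hQ)

theorem setLAverage_le_dyadicMaximal {Q : Set X} {x : X} (hQ : Q ∈ F) (hx : x ∈ Q) :
    ⨍⁻ y in Q, φ y ∂μ ≤ dyadicMaximal μ F φ x :=
  le_iSup₂_of_le (f := fun Q _ => Q.indicator (fun _ => ⨍⁻ y in Q, φ y ∂μ) x) Q hQ
    (by rw [indicator_of_mem hx])

theorem exists_lt_setLAverage_of_lt_dyadicMaximal {t : ℝ≥0∞} {x : X}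
    (h : t < dyadicMaximal μ F φ x) : ∃ Q ∈ F, x ∈ Q ∧ t < ⨍⁻ y in Q, φ y ∂μ := by
  simp only [dyadicMaximal, lt_iSup_iff] at h
  obtain ⟨Q, hQ, hlt⟩ := h
  by_cases hx : x ∈ Q
  · exact ⟨Q, hQ, hx, by rwa [indicator_of_mem hx] at hlt⟩
  · simp [hx] at hlt

theorem dyadicMaximal_ne_top (h : ∀ Q ∈ F, ⨍⁻ y in Q, φ y ∂μ ≠ ∞) (x : X) :
    dyadicMaximal μ F φ x ≠ ∞ := by
  refine ne_top_of_le_ne_top (ENNReal.sum_ne_top.2 h) (iSup₂_le fun Q hQ => ?_)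
  exact (indicator_le_self' (fun _ _ => zero_le) x).trans
    (Finset.single_le_sum (f := fun Q => ⨍⁻ y in Q, φ y ∂μ) (fun _ _ => zero_le) hQ)

theorem mul_measure_le_of_lt_setLAverage (hφ : Measurable φ) {Q : Set X} (hQ : μ Q ≠ ∞)
    {t : ℝ≥0∞} (ht : t < ⨍⁻ y in Q, φ y ∂μ) :
    t * μ Q ≤ 2 * ∫⁻ y in Q ∩ {y | t < 2 * φ y}, φ y ∂μ := by
  set A := {y | t < 2 * φ y}
  have hA : MeasurableSet A := measurableSet_lt measurable_const (hφ.const_mul 2)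
  have htμ : t * μ Q ≠ ∞ := ENNReal.mul_ne_top (ne_top_of_lt ht) hQ
  have hlow : t * μ Q ≤ ∫⁻ y in Q, φ y ∂μ :=
    ENNReal.mul_le_of_le_div (by rw [← setLAverage_eq]; exact ht.le)
  have hoff : 2 * ∫⁻ y in Q \ A, φ y ∂μ ≤ t * μ Q :=
    calc 2 * ∫⁻ y in Q \ A, φ y ∂μ ≤ ∫⁻ y in Q \ A, 2 * φ y ∂μ := lintegral_const_mul_le _ _
      _ ≤ ∫⁻ _ in Q \ A, t ∂μ := setLIntegral_mono measurable_const fun y hy => not_lt.1 hy.2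
      _ ≤ t * μ Q := by rw [setLIntegral_const]; gcongr; exact sdiff_subset
  refine ENNReal.le_of_add_le_add_right htμ ?_
  calc t * μ Q + t * μ Q = 2 * (t * μ Q) := (two_mul _).symm
    _ ≤ 2 * ∫⁻ y in Q, φ y ∂μ := by gcongr
    _ = 2 * ∫⁻ y in Q ∩ A, φ y ∂μ + 2 * ∫⁻ y in Q \ A, φ y ∂μ := by
      rw [← mul_add, lintegral_inter_add_sdiff _ _ hA]
    _ ≤ 2 * ∫⁻ y in Q ∩ A, φ y ∂μ + t * μ Q := by gcongr

theorem mul_measure_lt_dyadicMaximal_le (hF : IsDyadicGrid μ F) (hφ : Measurable φ)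
    (t : ℝ≥0∞) :
    t * μ {x | t < dyadicMaximal μ F φ x} ≤ 2 * ∫⁻ x in {x | t < 2 * φ x}, φ x ∂μ := by
  classical
  set A := {x | t < 2 * φ x}
  have hA : MeasurableSet A := measurableSet_lt measurable_const (hφ.const_mul 2)
  set 𝒬 := F.filter fun Q => t < ⨍⁻ y in Q, φ y ∂μ
  have h𝒬 : (𝒬 : Set (Set X)).Pairwise fun Q Q' => Disjoint Q Q' ∨ Q ⊆ Q' ∨ Q' ⊆ Q :=
    hF.disjoint_or_subset.mono (Finset.coe_subset.2 (Finset.filter_subset _ _))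
  obtain ⟨M, hM𝒬, hMdisj, hcover⟩ := exists_pairwiseDisjoint_subset_forall_subset h𝒬
  have hM : ∀ R ∈ M, R ∈ F ∧ t < ⨍⁻ y in R, φ y ∂μ := fun R hR => Finset.mem_filter.1 (hM𝒬 hR)
  have hlevel : {x | t < dyadicMaximal μ F φ x} ⊆ ⋃ R ∈ M, R := by
    intro x hx
    obtain ⟨Q, hQ, hxQ, hlt⟩ := exists_lt_setLAverage_of_lt_dyadicMaximal hx
    obtain ⟨R, hR, hQR⟩ := hcover Q (Finset.mem_filter.2 ⟨hQ, hlt⟩)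
    exact mem_biUnion hR (hQR hxQ)
  calc t * μ {x | t < dyadicMaximal μ F φ x} ≤ t * ∑ R ∈ M, μ R := by
        gcongr; exact (measure_mono hlevel).trans (measure_biUnion_finset_le _ _)
    _ ≤ ∑ R ∈ M, 2 * ∫⁻ x in R ∩ A, φ x ∂μ := by
        rw [Finset.mul_sum]
        exact Finset.sum_le_sum fun R hR => mul_measure_le_of_lt_setLAverage hφ
          (hF.measure_lt_top R (hM R hR).1).ne (hM R hR).2
    _ = 2 * ∫⁻ x in ⋃ R ∈ M, R ∩ A, φ x ∂μ := by
        rw [lintegral_biUnion_finset (t := fun R => R ∩ A)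
          (hMdisj.mono fun R => inter_subset_left)
          (fun R hR => (hF.measurableSet R (hM R hR).1).inter hA), Finset.mul_sum]
    _ ≤ 2 * ∫⁻ x in A, φ x ∂μ := by
        gcongr; exact iUnion₂_subset fun _ _ => inter_subset_right

theorem setLAverage_ne_top_of_lintegral_sq_ne_top {Q : Set X} (hQ0 : μ Q ≠ 0) (hQ : μ Q ≠ ∞)
    (hφ2 : ∫⁻ x, φ x ^ 2 ∂μ ≠ ∞) : ⨍⁻ y in Q, φ y ∂μ ≠ ∞ := by
  rw [setLAverage_eq]
  exact ENNReal.div_ne_top (setLIntegral_ne_top_of_lintegral_sq_ne_top hQ hφ2) hQ0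

theorem lintegral_dyadicMaximal_sq_le (hF : IsDyadicGrid μ F) (hφ : Measurable φ)
    (hφ_top : ∀ x, φ x ≠ ∞) :
    ∫⁻ x, dyadicMaximal μ F φ x ^ 2 ∂μ ≤ 8 * ∫⁻ x, φ x ^ 2 ∂μ := by
  by_cases hφ2 : ∫⁻ x, φ x ^ 2 ∂μ = ∞
  · simp [hφ2]
  have hM_top : ∀ x, dyadicMaximal μ F φ x ≠ ∞ := dyadicMaximal_ne_top fun Q hQ =>
    setLAverage_ne_top_of_lintegral_sq_ne_top (hF.measure_pos Q hQ).ne'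
      (hF.measure_lt_top Q hQ).ne hφ2
  -- layer-cake on both sides, with the weak-type bound in between
  set m : X → ℝ := fun x => (dyadicMaximal μ F φ x).toReal
  set g : X → ℝ := fun x => (2 * φ x).toReal
  set ν := μ.withDensity φ
  have hg_top : ∀ x, 2 * φ x ≠ ∞ := fun x => ENNReal.mul_ne_top ENNReal.ofNat_ne_top (hφ_top x)
  have hweak : ∀ s ∈ Ioi (0 : ℝ),
      μ {x | s < m x} * ENNReal.ofReal (s ^ ((2 : ℝ) - 1)) ≤ 2 * ν {x | s < g x} := by
    intro s hs
    have hm : {x | s < m x} = {x | ENNReal.ofReal s < dyadicMaximal μ F φ x} := by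
      ext x; exact (ENNReal.ofReal_lt_iff_lt_toReal (le_of_lt hs) (hM_top x)).symm
    have hg : {x | s < g x} = {x | ENNReal.ofReal s < 2 * φ x} := by
      ext x; exact (ENNReal.ofReal_lt_iff_lt_toReal (le_of_lt hs) (hg_top x)).symm
    rw [hm, hg, withDensity_apply _ (measurableSet_lt measurable_const (hφ.const_mul 2)),
      mul_comm, show (2 : ℝ) - 1 = 1 by norm_num, rpow_one]
    exact mul_measure_lt_dyadicMaximal_le hF hφ _
  calc ∫⁻ x, dyadicMaximal μ F φ x ^ 2 ∂μ = ∫⁻ x, ENNReal.ofReal (m x ^ (2 : ℝ)) ∂μ := by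
        refine lintegral_congr fun x => ?_
        rw [rpow_two, ENNReal.ofReal_pow ENNReal.toReal_nonneg, ENNReal.ofReal_toReal (hM_top x)]
    _ = ENNReal.ofReal 2 *
          ∫⁻ s in Ioi 0, μ {x | s < m x} * ENNReal.ofReal (s ^ ((2 : ℝ) - 1)) :=
        lintegral_rpow_eq_lintegral_meas_lt_mul μ (ae_of_all _ fun _ => ENNReal.toReal_nonneg)
          (measurable_dyadicMaximal hF.measurableSet φ).ennreal_toReal.aemeasurable two_pos
    _ ≤ 2 * ∫⁻ s in Ioi 0, 2 * ν {x | s < g x} := by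
        rw [ENNReal.ofReal_ofNat]
        gcongr 2 * ?_
        exact setLIntegral_mono' measurableSet_Ioi hweak
    _ = 4 * ∫⁻ x, ENNReal.ofReal (g x) ∂ν := by
        rw [lintegral_const_mul' _ _ ENNReal.ofNat_ne_top,
          ← lintegral_eq_lintegral_meas_lt _ (ae_of_all _ fun _ => ENNReal.toReal_nonneg)
            (hφ.const_mul 2).ennreal_toReal.aemeasurable, ← mul_assoc, two_mul 2,
          two_add_two_eq_four]
    _ = 8 * ∫⁻ x, φ x ^ 2 ∂μ := by
        simp_rw [g, ENNReal.ofReal_toReal (hg_top _)]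
        rw [lintegral_withDensity_eq_lintegral_mul _ hφ (hφ.const_mul 2)]
        simp only [Pi.mul_apply, mul_left_comm (φ _) 2, ← sq]
        rw [lintegral_const_mul' _ _ ENNReal.ofNat_ne_top, ← mul_assoc]
        norm_num

theorem lintegral_mul_sq_le {f g : X → ℝ≥0∞} (hf : AEMeasurable f μ) (hg : AEMeasurable g μ) :
    (∫⁻ x, f x * g x ∂μ) ^ 2 ≤ (∫⁻ x, f x ^ 2 ∂μ) * ∫⁻ x, g x ^ 2 ∂μ := by
  have h := ENNReal.lintegral_mul_le_Lp_mul_Lq μ Real.HolderConjugate.two_two hf hg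
  simp only [Pi.mul_apply, ENNReal.rpow_two, one_div] at h
  calc (∫⁻ x, f x * g x ∂μ) ^ 2
      ≤ ((∫⁻ x, f x ^ 2 ∂μ) ^ (2⁻¹ : ℝ) * (∫⁻ x, g x ^ 2 ∂μ) ^ (2⁻¹ : ℝ)) ^ 2 := by gcongr
    _ = (∫⁻ x, f x ^ 2 ∂μ) * ∫⁻ x, g x ^ 2 ∂μ := by
      simp only [mul_pow, ← ENNReal.rpow_two, ENNReal.rpow_inv_rpow two_ne_zero]

theorem lintegral_sum_indicator_sq {F : Finset (Set X)} (hF : ∀ Q ∈ F, MeasurableSet Q)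
    (c : Set X → ℝ≥0∞) :
    ∫⁻ x, (∑ Q ∈ F, Q.indicator (fun _ => c Q) x) ^ 2 ∂μ =
      ∑ Q ∈ F, c Q * ∫⁻ x in Q, ∑ R ∈ F, R.indicator (fun _ => c R) x ∂μ := by
  set G := fun x => ∑ R ∈ F, R.indicator (fun _ => c R) x
  have hG : Measurable G :=
    Finset.measurable_sum _ fun R hR => measurable_const.indicator (hF R hR)
  have hsq : ∀ x, G x ^ 2 = ∑ Q ∈ F, c Q * Q.indicator G x := fun x => by
    rw [sq, Finset.sum_mul]
    refine Finset.sum_congr rfl fun Q _ => ?_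
    by_cases hx : x ∈ Q <;> simp [hx]
  rw [lintegral_congr hsq,
    lintegral_finsetSum _ fun Q hQ => (hG.indicator (hF Q hQ)).const_mul _]
  refine Finset.sum_congr rfl fun Q hQ => ?_
  rw [lintegral_const_mul _ (hG.indicator (hF Q hQ)), lintegral_indicator (hF Q hQ)]

theorem sum_setLAverage_mul_setLIntegral_le {E : Set X → Set X} (hF : IsDyadicGrid μ F)
    (hS : IsSparse μ F E) (ψ : X → ℝ≥0∞) :
    ∑ Q ∈ F, (⨍⁻ y in Q, φ y ∂μ) * ∫⁻ y in Q, ψ y ∂μ ≤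
      2 * ∫⁻ x, dyadicMaximal μ F φ x * dyadicMaximal μ F ψ x ∂μ := by
  set Mφψ := fun x => dyadicMaximal μ F φ x * dyadicMaximal μ F ψ x
  have hcube : ∀ Q ∈ F, (⨍⁻ y in Q, φ y ∂μ) * ∫⁻ y in Q, ψ y ∂μ ≤
      2 * ∫⁻ x in E Q, Mφψ x ∂μ := fun Q hQ =>
    calc (⨍⁻ y in Q, φ y ∂μ) * ∫⁻ y in Q, ψ y ∂μ
        = (⨍⁻ y in Q, φ y ∂μ) * (⨍⁻ y in Q, ψ y ∂μ) * μ Q := by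
          rw [setLAverage_eq μ ψ, mul_assoc, ENNReal.div_mul_cancel (hF.measure_pos Q hQ).ne'
            (hF.measure_lt_top Q hQ).ne]
      _ ≤ (⨍⁻ y in Q, φ y ∂μ) * (⨍⁻ y in Q, ψ y ∂μ) * (2 * μ (E Q)) := by
          gcongr; exact hS.measure_le Q hQ
      _ = 2 * ∫⁻ _ in E Q, (⨍⁻ y in Q, φ y ∂μ) * (⨍⁻ y in Q, ψ y ∂μ) ∂μ := by
          rw [setLIntegral_const]; ring
      _ ≤ 2 * ∫⁻ x in E Q, Mφψ x ∂μ := by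
          gcongr 2 * ?_
          refine setLIntegral_mono' (hS.measurableSet Q hQ) fun x hx => ?_
          have hxQ := hS.subset Q hQ hx
          exact mul_le_mul' (setLAverage_le_dyadicMaximal hQ hxQ)
            (setLAverage_le_dyadicMaximal hQ hxQ)
  calc ∑ Q ∈ F, (⨍⁻ y in Q, φ y ∂μ) * ∫⁻ y in Q, ψ y ∂μ
      ≤ ∑ Q ∈ F, 2 * ∫⁻ x in E Q, Mφψ x ∂μ := Finset.sum_le_sum hcube
    _ = 2 * ∫⁻ x in ⋃ Q ∈ F, E Q, Mφψ x ∂μ := by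
        rw [lintegral_biUnion_finset hS.pairwiseDisjoint hS.measurableSet, Finset.mul_sum]
    _ ≤ 2 * ∫⁻ x, Mφψ x ∂μ := by gcongr 2 * ?_; exact setLIntegral_le_lintegral _ _

theorem lintegral_sum_setLAverage_indicator_sq_le {E : Set X → Set X} (hF : IsDyadicGrid μ F)
    (hS : IsSparse μ F E) (hφ : Measurable φ) (hφ_top : ∀ x, φ x ≠ ∞) :
    ∫⁻ x, (∑ Q ∈ F, Q.indicator (fun _ => ⨍⁻ y in Q, φ y ∂μ) x) ^ 2 ∂μ ≤
      256 * ∫⁻ x, φ x ^ 2 ∂μ := by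
  set Y := ∫⁻ x, φ x ^ 2 ∂μ
  by_cases hY : Y = ∞
  · simp [hY]
  set a := fun Q => ⨍⁻ y in Q, φ y ∂μ
  set G := fun x => ∑ Q ∈ F, Q.indicator (fun _ => a Q) x
  set I := ∫⁻ x, G x ^ 2 ∂μ
  have ha : ∀ Q ∈ F, a Q ≠ ∞ := fun Q hQ => setLAverage_ne_top_of_lintegral_sq_ne_top
    (hF.measure_pos Q hQ).ne' (hF.measure_lt_top Q hQ).ne hY
  have hG_le : ∀ x, G x ≤ ∑ Q ∈ F, a Q := fun x =>
    Finset.sum_le_sum fun Q _ => indicator_le_self' (fun _ _ => zero_le) x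
  have hG_top : ∀ x, G x ≠ ∞ := fun x => ne_top_of_le_ne_top (ENNReal.sum_ne_top.2 ha) (hG_le x)
  have hG : Measurable G :=
    Finset.measurable_sum _ fun Q hQ => measurable_const.indicator (hF.measurableSet Q hQ)
  have hI : I = ∑ Q ∈ F, a Q * ∫⁻ x in Q, G x ∂μ := lintegral_sum_indicator_sq hF.measurableSet a
  have hI_top : I ≠ ∞ := by
    rw [hI]
    refine ENNReal.sum_ne_top.2 fun Q hQ => ENNReal.mul_ne_top (ha Q hQ) ?_
    refine ne_top_of_le_ne_top ?_ (setLIntegral_mono' (hF.measurableSet Q hQ) fun x _ => hG_le x)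
    rw [setLIntegral_const]
    exact ENNReal.mul_ne_top (ENNReal.sum_ne_top.2 ha) (hF.measure_lt_top Q hQ).ne
  have hsq : I ^ 2 ≤ 256 * Y * I :=
    calc I ^ 2 ≤ (2 * ∫⁻ x, dyadicMaximal μ F φ x * dyadicMaximal μ F G x ∂μ) ^ 2 := by
          rw [hI]; gcongr; exact sum_setLAverage_mul_setLIntegral_le hF hS G
      _ ≤ 4 * ((∫⁻ x, dyadicMaximal μ F φ x ^ 2 ∂μ) * ∫⁻ x, dyadicMaximal μ F G x ^ 2 ∂μ) := by
          rw [mul_pow]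
          gcongr
          · norm_num
          · exact lintegral_mul_sq_le
              (measurable_dyadicMaximal hF.measurableSet φ).aemeasurable
              (measurable_dyadicMaximal hF.measurableSet G).aemeasurable
      _ ≤ 4 * ((8 * Y) * (8 * I)) := by
          gcongr
          · exact lintegral_dyadicMaximal_sq_le hF hφ hφ_top
          · exact lintegral_dyadicMaximal_sq_le hF hG hG_top
      _ = 256 * Y * I := by ring
  by_cases hI0 : I = 0
  · simp [hI0]
  rw [sq] at hsq
  exact (ENNReal.mul_le_mul_iff_left hI0 hI_top).1 hsq

theorem lintegral_tsum_sq_le_of_forall_finset {ι : Type*} [Countable ι] {g : ι → X → ℝ≥0∞}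
    (hg : ∀ i, Measurable (g i)) {C : ℝ≥0∞}
    (h : ∀ s : Finset ι, ∫⁻ x, (∑ i ∈ s, g i x) ^ 2 ∂μ ≤ C) :
    ∫⁻ x, (∑' i, g i x) ^ 2 ∂μ ≤ C := by
  have hsq : ∀ x, (∑' i, g i x) ^ 2 = ⨆ s : Finset ι, (∑ i ∈ s, g i x) ^ 2 := fun x => by
    rw [ENNReal.tsum_eq_iSup_sum]
    exact Monotone.map_iSup_of_continuousAt (ENNReal.continuous_pow 2).continuousAt
      (pow_left_mono 2) (zero_pow two_ne_zero)
  have hmono : Monotone fun s : Finset ι => fun x => (∑ i ∈ s, g i x) ^ 2 :=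
    fun s t hst x => pow_le_pow_left' (Finset.sum_le_sum_of_subset hst) 2
  rw [lintegral_congr hsq, lintegral_iSup_directed
    (fun s => ((Finset.measurable_sum s fun i _ => hg i).pow_const 2).aemeasurable)
    hmono.directed_le]
  exact iSup_le h

theorem eLpNorm_two_sq {ε : Type*} [ENorm ε] (f : X → ε) :
    eLpNorm f 2 μ ^ 2 = ∫⁻ x, ‖f x‖ₑ ^ 2 ∂μ := by
  simpa [ENNReal.rpow_two] using eLpNorm_nnreal_pow_eq_lintegral (f := f) (μ := μ) (p := 2)
    two_ne_zero

noncomputable def sparseOperator (μ : Measure X) (S : Set (Set X)) (φ : X → ℝ≥0∞) (x : X) :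
    ℝ≥0∞ :=
  ∑' Q : S, (Q : Set X).indicator (fun _ => ⨍⁻ y in Q, φ y ∂μ) x

theorem eLpNorm_sparseOperator_le {S : Set (Set X)} {E : Set X → Set X} (hD : IsDyadicGrid μ S)
    (hS : IsSparse μ S E) (hφ : Measurable φ) (hφ_top : ∀ x, φ x ≠ ∞) :
    eLpNorm (sparseOperator μ S φ) 2 μ ≤ 16 * eLpNorm φ 2 μ := by
  have : Countable S := hD.countable.to_subtype
  rw [← ENNReal.pow_le_pow_left_iff two_ne_zero, mul_pow, eLpNorm_two_sq, eLpNorm_two_sq]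
  simp only [enorm_eq_self, sparseOperator, show (16 : ℝ≥0∞) ^ 2 = 256 by norm_num]
  refine lintegral_tsum_sq_le_of_forall_finset (ι := S)
    (fun Q => measurable_const.indicator (hD.measurableSet Q Q.2)) fun s => ?_
  have hsub : ↑(s.map (Function.Embedding.subtype _)) ⊆ S := by
    intro Q hQ
    obtain ⟨R, -, rfl⟩ := Finset.mem_map.1 hQ
    exact R.2
  convert lintegral_sum_setLAverage_indicator_sq_le (hD.mono hsub) (hS.mono hsub) hφ hφ_top
    using 4
  rw [Finset.sum_map]
  rfl

theorem enorm_tsum_setAverage_mul_indicator_le_sparseOperator (S : Set (Set X)) (f : X → ℝ)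
    (x : X) :
    ‖∑' Q : S, (((μ (Q : Set X)).toReal)⁻¹ * ∫ y in (Q : Set X), f y ∂μ) *
        (Q : Set X).indicator (fun _ => (1 : ℝ)) x‖ₑ ≤
      sparseOperator μ S (fun y => ‖f y‖ₑ) x := by
  refine enorm_tsum_le_tsum_enorm.trans (ENNReal.tsum_le_tsum fun Q => ?_)
  by_cases hx : x ∈ (Q : Set X)
  · simp only [indicator_of_mem hx, mul_one, enorm_mul, setLAverage_eq, ENNReal.div_eq_inv_mul]
    gcongr
    · rw [← ENNReal.toReal_inv, Real.enorm_eq_ofReal ENNReal.toReal_nonneg]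
      exact ENNReal.ofReal_toReal_le
    · exact enorm_integral_le_lintegral_enorm _
  · simp [hx]

end

/-- A sparse operator associated to a sparse family `S` of dyadic cubes is bounded on
`L²(μ)` with an absolute constant. -/
theorem sparse_operator_L2_bounded :
    ∃ Cc : ℝ, 0 < Cc ∧
      ∀ (X : Type) (_ : MeasurableSpace X) (μ : Measure X)
        (D : Set (Set X)), D.Countable →
        (∀ Q ∈ D, MeasurableSet Q) →
        (∀ Q ∈ D, 0 < μ Q ∧ μ Q < ⊤) →
        (∀ Q ∈ D, ∀ Q' ∈ D, Q ∩ Q' = ∅ ∨ Q ⊆ Q' ∨ Q' ⊆ Q) →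
        ∀ (S : Set (Set X)), S ⊆ D →
        ∀ (E : Set X → Set X),
          (∀ Q ∈ S, E Q ⊆ Q) →
          (∀ Q ∈ S, MeasurableSet (E Q)) →
          (∀ Q ∈ S, ∀ Q' ∈ S, Q ≠ Q' → E Q ∩ E Q' = ∅) →
          (∀ Q ∈ S, μ Q ≤ 2 * μ (E Q)) →
          ∀ f : X → ℝ, Measurable f → (∀ x, 0 ≤ f x) → MemLp f 2 μ →
            eLpNorm
              (fun x => ∑' Q : S,
                (((μ (Q : Set X)).toReal)⁻¹ * ∫ y in (Q : Set X), f y ∂μ) *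
                  (Q : Set X).indicator (fun _ => (1 : ℝ)) x) 2 μ
              ≤ ENNReal.ofReal Cc * eLpNorm f 2 μ := by
  refine ⟨16, by norm_num, ?_⟩
  intro X _ μ D hD_count hD_meas hD_measure hD_nested S hSD E hE_sub hE_meas hE_disj hE_measure
    f hf _ _
  have hD : IsDyadicGrid μ S := IsDyadicGrid.mono
    ⟨hD_count, hD_meas, fun Q hQ => (hD_measure Q hQ).1, fun Q hQ => (hD_measure Q hQ).2,
      fun Q hQ Q' hQ' _ => (hD_nested Q hQ Q' hQ').imp_left disjoint_iff_inter_eq_empty.2⟩ hSD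
  have hS : IsSparse μ S E := ⟨hE_sub, hE_meas,
    fun Q hQ Q' hQ' hne => disjoint_iff_inter_eq_empty.2 (hE_disj Q hQ Q' hQ' hne), hE_measure⟩
  calc _ ≤ eLpNorm (sparseOperator μ S fun y => ‖f y‖ₑ) 2 μ :=
        eLpNorm_mono_enorm fun x =>
          (enorm_tsum_setAverage_mul_indicator_le_sparseOperator S f x).trans_eq
            (enorm_eq_self _).symm
    _ ≤ 16 * eLpNorm (fun y => ‖f y‖ₑ) 2 μ :=
        eLpNorm_sparseOperator_le hD hS hf.enorm fun _ => enorm_ne_top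
    _ = ENNReal.ofReal 16 * eLpNorm f 2 μ := by rw [eLpNorm_enorm, ENNReal.ofReal_ofNat]
end

section
/- Let D be a dyadic grid on a measure space (X, μ) with μ(X) = ∞, satisfying: every Q ∈ D has a parent in D, children of a cube cover it, any two cubes are disjoint or nested, and each child Q₂ of Q₁ satisfies μ(Q₂) ≥ ε μ(Q₁). Fix a > 2/ε. For f measurable with ⨍_Q |f| dμ → 0 as μ(Q) → ∞, let Ω_k = {x : M^D f(x) > a^k} = ∪_j Q_j^k, where {Q_j^k}_j are the maximal dyadic cubes Q with ⨍_Q |f| dμ > a^k. Then the family S = {Q_j^k : k ∈ ℤ, j} is sparse: the sets E(Q_j^k) = Q_j^k \ Ω_{k+1} are pairwise disjoint and μ(Q_j^k) ≤ 2 μ(E(Q_j^k)). -/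
/-!
Let `Q` be a maximal cube at height `a^k` with parent `P`. The maximal cubes at height `a^(k+1)`
meeting `Q` lie inside `Q`, are pairwise disjoint, and each carries more than `a^(k+1)` times its
measure of the mass of `|f|`; that mass is bounded by the mass on `P`, which is at most
`a^k μ(P) ≤ a^k μ(Q) / ε` by maximality of `Q`. Hence `μ(Q ∩ Ω_{k+1}) ≤ μ(Q) / (ε a) ≤ μ(Q) / 2`.
The sets `Q \ Ω_{k+1}` are disjoint because cubes of one level are disjoint, while a cube of a
higher level `k' > k` lies inside `Ω_{k+1}`.
-/

open MeasureTheory Real Set Filter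

open scoped ENNReal

section Laminar

variable {X : Type*}

def IsLaminar (D : Set (Set X)) : Prop :=
  ∀ Q ∈ D, ∀ R ∈ D, Q ∩ R = ∅ ∨ Q ⊆ R ∨ R ⊆ Q

def IsMaximalCube (D : Set (Set X)) (g : Set X → ℝ) (t : ℝ) (Q : Set X) : Prop :=
  Q ∈ D ∧ t < g Q ∧ ∀ R ∈ D, Q ⊂ R → g R ≤ t

variable {D : Set (Set X)} {g : Set X → ℝ} {t : ℝ} {Q R : Set X}

theorem IsMaximalCube.subset_of_lt (hD : IsLaminar D) (hQ : IsMaximalCube D g t Q) (hR : R ∈ D)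
    (htR : t < g R) {x : X} (hxQ : x ∈ Q) (hxR : x ∈ R) : R ⊆ Q := by
  rcases hD R hR Q hQ.1 with h | h | h
  · exact (h ▸ mem_inter hxR hxQ : x ∈ (∅ : Set X)).elim
  · exact h
  · obtain rfl | hne := eq_or_ne Q R
    · rfl
    · exact absurd (hQ.2.2 R hR (h.ssubset_of_ne hne)) htR.not_ge

theorem IsMaximalCube.pairwiseDisjoint (hD : IsLaminar D) {𝒬 : Set (Set X)}
    (h𝒬 : ∀ Q ∈ 𝒬, IsMaximalCube D g t Q) : 𝒬.PairwiseDisjoint id := by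
  intro Q hQ R hR hne
  refine Set.disjoint_left.mpr fun x hxQ hxR => hne ?_
  exact ((h𝒬 Q hQ).subset_of_lt hD (h𝒬 R hR).1 (h𝒬 R hR).2.1 hxQ hxR).antisymm'
    ((h𝒬 R hR).subset_of_lt hD (h𝒬 Q hQ).1 (h𝒬 Q hQ).2.1 hxR hxQ)

end Laminar

section Measure

variable {X : Type*} [MeasurableSpace X] {μ : Measure X}

theorem ofReal_setAverage_abs_mul_measure {f : X → ℝ} {R : Set X} (hR : μ R ≠ ∞)
    (hf : IntegrableOn f R μ) :
    ENNReal.ofReal (⨍ x in R, |f x| ∂μ) * μ R = ∫⁻ x in R, ENNReal.ofReal |f x| ∂μ := by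
  rw [← ofReal_integral_eq_lintegral_ofReal hf.abs (Eventually.of_forall fun x => abs_nonneg _),
    ← measure_smul_setAverage _ hR, smul_eq_mul, mul_comm,
    ENNReal.ofReal_mul measureReal_nonneg, ofReal_measureReal hR]

theorem mul_measure_biUnion_le_lintegral {S : Set (Set X)} (hS : S.Countable)
    (hSd : S.PairwiseDisjoint id) (hSm : ∀ R ∈ S, MeasurableSet R) {c : ℝ≥0∞} {g : X → ℝ≥0∞}
    (hc : ∀ R ∈ S, c * μ R ≤ ∫⁻ x in R, g x ∂μ) :
    c * μ (⋃ R ∈ S, R) ≤ ∫⁻ x in ⋃ R ∈ S, R, g x ∂μ := by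
  change c * μ (⋃ R ∈ S, id R) ≤ ∫⁻ x in ⋃ R ∈ S, id R, g x ∂μ
  rw [measure_biUnion hS hSd hSm, lintegral_biUnion (s := id) hS hSm hSd, ← ENNReal.tsum_mul_left]
  exact ENNReal.tsum_le_tsum fun R => hc R R.2

theorem measure_le_two_mul_measure_diff {s t : Set X} (hs : μ s ≠ ∞)
    (h : 2 * μ (s ∩ t) ≤ μ s) : μ s ≤ 2 * μ (s \ t) := by
  refine (ENNReal.add_le_add_iff_left hs).mp ?_
  calc μ s + μ s = 2 * μ s := (two_mul _).symm
    _ ≤ 2 * μ (s ∩ t) + 2 * μ (s \ t) := by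
      rw [← mul_add]; gcongr; exact measure_le_inter_add_sdiff μ s t
    _ ≤ μ s + 2 * μ (s \ t) := by gcongr

end Measure

section StoppingCubes

variable {X : Type*} [MeasurableSpace X] {μ : Measure X} {D 𝒬 : Set (Set X)} {f : X → ℝ}
  {t s : ℝ} {Q P : Set X}

local notation "avg" => fun R : Set X => ⨍ x in R, |f x| ∂μ

theorem IsMaximalCube.ofReal_mul_measure_inter_le (hD : IsLaminar D) (hDc : D.Countable)
    (hDm : ∀ R ∈ D, MeasurableSet R) (hQ : IsMaximalCube D avg t Q) (hP : P ∈ D) (hQP : Q ⊂ P)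
    (hPfin : μ P ≠ ∞) (hfP : IntegrableOn f P μ) (h𝒬 : ∀ R ∈ 𝒬, IsMaximalCube D avg s R)
    (hts : t ≤ s) :
    ENNReal.ofReal s * μ (Q ∩ ⋃ R ∈ 𝒬, R) ≤ ENNReal.ofReal t * μ P := by
  set S := {R ∈ 𝒬 | R ⊆ Q}
  have hSD : S ⊆ D := fun R hR => (h𝒬 R hR.1).1
  have hcover : Q ∩ ⋃ R ∈ 𝒬, R ⊆ ⋃ R ∈ S, R := by
    rintro x ⟨hxQ, hx⟩
    obtain ⟨R, hR, hxR⟩ := mem_iUnion₂.mp hx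
    have hRQ := hQ.subset_of_lt hD (h𝒬 R hR).1 (hts.trans_lt (h𝒬 R hR).2.1) hxQ hxR
    exact mem_biUnion ⟨hR, hRQ⟩ hxR
  have hSP : ⋃ R ∈ S, R ⊆ P := iUnion₂_subset fun R hR => hR.2.trans hQP.subset
  have hmass : ∀ R ∈ S, ENNReal.ofReal s * μ R ≤ ∫⁻ x in R, ENNReal.ofReal |f x| ∂μ := by
    intro R hR
    have hRP : R ⊆ P := hR.2.trans hQP.subset
    rw [← ofReal_setAverage_abs_mul_measure (measure_ne_top_of_subset hRP hPfin) (hfP.mono_set hRP)]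
    gcongr
    exact (h𝒬 R hR.1).2.1.le
  calc ENNReal.ofReal s * μ (Q ∩ ⋃ R ∈ 𝒬, R)
      ≤ ENNReal.ofReal s * μ (⋃ R ∈ S, R) := by gcongr
    _ ≤ ∫⁻ x in ⋃ R ∈ S, R, ENNReal.ofReal |f x| ∂μ :=
      mul_measure_biUnion_le_lintegral (hDc.mono hSD)
        ((IsMaximalCube.pairwiseDisjoint hD h𝒬).subset fun R hR => hR.1)
        (fun R hR => hDm R (hSD hR)) hmass
    _ ≤ ∫⁻ x in P, ENNReal.ofReal |f x| ∂μ := lintegral_mono_set hSP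
    _ = ENNReal.ofReal (avg P) * μ P := (ofReal_setAverage_abs_mul_measure hPfin hfP).symm
    _ ≤ ENNReal.ofReal t * μ P := by gcongr; exact hQ.2.2 P hP hQP

theorem IsMaximalCube.two_mul_measure_inter_le (hD : IsLaminar D) (hDc : D.Countable)
    (hDm : ∀ R ∈ D, MeasurableSet R) (hQ : IsMaximalCube D avg t Q) (hP : P ∈ D) (hQP : Q ⊂ P)
    (hPfin : μ P ≠ ∞) (hfP : IntegrableOn f P μ) {ε : ℝ} (hratio : ENNReal.ofReal ε * μ P ≤ μ Q)
    (h𝒬 : ∀ R ∈ 𝒬, IsMaximalCube D avg s R) (ht : 0 < t) (hts : t ≤ s)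
    (hεs : 2 * t ≤ ε * s) :
    2 * μ (Q ∩ ⋃ R ∈ 𝒬, R) ≤ μ Q := by
  have hpack := hQ.ofReal_mul_measure_inter_le hD hDc hDm hP hQP hPfin hfP h𝒬 hts
  refine (ENNReal.mul_le_mul_iff_right (ENNReal.ofReal_pos.mpr ht).ne' ENNReal.ofReal_ne_top).mp ?_
  calc ENNReal.ofReal t * (2 * μ (Q ∩ ⋃ R ∈ 𝒬, R))
      = ENNReal.ofReal (2 * t) * μ (Q ∩ ⋃ R ∈ 𝒬, R) := by
        rw [ENNReal.ofReal_mul zero_le_two, ENNReal.ofReal_ofNat]; ring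
    _ ≤ ENNReal.ofReal ε * (ENNReal.ofReal s * μ (Q ∩ ⋃ R ∈ 𝒬, R)) := by
        rw [← mul_assoc, ← ENNReal.ofReal_mul' (ht.le.trans hts)]; gcongr
    _ ≤ ENNReal.ofReal ε * (ENNReal.ofReal t * μ P) := by gcongr
    _ = ENNReal.ofReal t * (ENNReal.ofReal ε * μ P) := mul_left_comm _ _ _
    _ ≤ ENNReal.ofReal t * μ Q := by gcongr

end StoppingCubes

theorem diff_succ_inter_diff_succ_eq_empty {X : Type*} {𝒬 : ℤ → Set (Set X)} {Ω : ℤ → Set X}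
    (hsub : ∀ k k', k < k' → ∀ Q ∈ 𝒬 k', Q ⊆ Ω (k + 1))
    (hdisj : ∀ k, (𝒬 k).PairwiseDisjoint id) :
    ∀ k k' : ℤ, ∀ Q ∈ 𝒬 k, ∀ Q' ∈ 𝒬 k', (k ≠ k' ∨ Q ≠ Q') →
      (Q \ Ω (k + 1)) ∩ (Q' \ Ω (k' + 1)) = ∅ := by
  intro k k' Q hQ Q' hQ' hne
  rw [← disjoint_iff_inter_eq_empty]
  rcases lt_trichotomy k k' with hlt | rfl | hlt
  · exact disjoint_sdiff_left.mono_right (sdiff_subset.trans (hsub k k' hlt Q' hQ'))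
  · exact (hdisj k hQ hQ' (by simpa using hne)).mono sdiff_subset sdiff_subset
  · exact disjoint_sdiff_right.mono_left (sdiff_subset.trans (hsub k' k hlt Q hQ))

theorem CZ_cubes_sparse_general {X : Type*} [MeasurableSpace X] (μ : Measure X)
    (D : Set (Set X)) (hDc : D.Countable)
    (hDm : ∀ Q ∈ D, MeasurableSet Q) (hDfin : ∀ Q ∈ D, 0 < μ Q ∧ μ Q < ⊤)
    (hnest : ∀ Q ∈ D, ∀ Q' ∈ D, Q ∩ Q' = ∅ ∨ Q ⊆ Q' ∨ Q' ⊆ Q)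
    (parent : Set X → Set X)
    (hparent : ∀ Q ∈ D, parent Q ∈ D ∧ Q ⊆ parent Q ∧ Q ≠ parent Q)
    (ε : ℝ) (hε : 0 < ε) (hε1 : ε ≤ 1)
    (hratio : ∀ Q ∈ D, ENNReal.ofReal ε * μ (parent Q) ≤ μ Q)
    (a : ℝ) (ha : 2 / ε < a)
    (f : X → ℝ) (hfint : ∀ Q ∈ D, IntegrableOn f Q μ)
    (avg : Set X → ℝ)
    (havg : ∀ Q : Set X, avg Q = ((μ Q).toReal)⁻¹ * ∫ x in Q, |f x| ∂μ)
    (𝒬 : ℤ → Set (Set X)) (h𝒬D : ∀ k, 𝒬 k ⊆ D)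
    (hmax1 : ∀ k : ℤ, ∀ Q ∈ 𝒬 k, a ^ k < avg Q)
    (hmax2 : ∀ k : ℤ, ∀ Q ∈ 𝒬 k, ∀ Q' ∈ D, Q ⊂ Q' → avg Q' ≤ a ^ k)
    (Ω : ℤ → Set X) (hΩ : ∀ k, Ω k = ⋃ Q ∈ 𝒬 k, Q)
    (hΩeq : ∀ k : ℤ, Ω k = {x | ∃ Q ∈ D, x ∈ Q ∧ a ^ k < avg Q}) :
    (∀ k : ℤ, ∀ Q ∈ 𝒬 k, μ Q ≤ 2 * μ (Q \ Ω (k + 1))) ∧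
      (∀ k k' : ℤ, ∀ Q ∈ 𝒬 k, ∀ Q' ∈ 𝒬 k', (k ≠ k' ∨ Q ≠ Q') →
        (Q \ Ω (k + 1)) ∩ (Q' \ Ω (k' + 1)) = ∅) := by
  obtain rfl : avg = fun Q => ⨍ x in Q, |f x| ∂μ :=
    funext fun Q => by rw [havg, setAverage_eq, smul_eq_mul, measureReal_def]
  have hεa : 2 < ε * a := by rw [div_lt_iff₀ hε] at ha; linarith
  have ha1 : 1 < a := by nlinarith
  have hmax : ∀ k, ∀ Q ∈ 𝒬 k, IsMaximalCube D (fun Q => ⨍ x in Q, |f x| ∂μ) (a ^ k) Q :=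
    fun k Q hQ => ⟨h𝒬D k hQ, hmax1 k Q hQ, hmax2 k Q hQ⟩
  refine ⟨fun k Q hQ => ?_, diff_succ_inter_diff_succ_eq_empty (fun k k' hlt Q hQ x hx => ?_)
    fun k => IsMaximalCube.pairwiseDisjoint hnest (hmax k)⟩
  · obtain ⟨hP, hQP, hne⟩ := hparent Q (h𝒬D k hQ)
    have hpow : 0 < a ^ k := zpow_pos (by linarith) k
    have hstep : a ^ (k + 1) = a ^ k * a := zpow_add_one₀ (by linarith) k
    refine measure_le_two_mul_measure_diff (hDfin Q (h𝒬D k hQ)).2.ne ?_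
    rw [hΩ]
    exact (hmax k Q hQ).two_mul_measure_inter_le hnest hDc hDm hP (hQP.ssubset_of_ne hne)
      (hDfin _ hP).2.ne (hfint _ hP) (hratio Q (h𝒬D k hQ)) (hmax (k + 1)) hpow
      (zpow_le_zpow_right₀ ha1.le (by omega)) (by rw [hstep]; nlinarith)
  · rw [hΩeq]
    exact ⟨Q, h𝒬D k' hQ, hx, (zpow_le_zpow_right₀ ha1.le (by omega)).trans_lt (hmax1 k' Q hQ)⟩

/-- The Calderón–Zygmund cubes at all heights `a^k`, `a > 2/ε`, form a sparse family:
the sets `E(Q_j^k) = Q_j^k \ Ω_{k+1}` are pairwise disjoint and `μ(Q_j^k) ≤ 2 μ(E(Q_j^k))`. -/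
theorem CZ_cubes_sparse {X : Type*} [MeasurableSpace X] (μ : Measure X)
    (hXinf : μ Set.univ = ⊤)
    (D : Set (Set X)) (hDc : D.Countable)
    (hDm : ∀ Q ∈ D, MeasurableSet Q) (hDfin : ∀ Q ∈ D, 0 < μ Q ∧ μ Q < ⊤)
    (hnest : ∀ Q ∈ D, ∀ Q' ∈ D, Q ∩ Q' = ∅ ∨ Q ⊆ Q' ∨ Q' ⊆ Q)
    (parent : Set X → Set X)
    (hparent : ∀ Q ∈ D, parent Q ∈ D ∧ Q ⊆ parent Q ∧ Q ≠ parent Q)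
    (hcover : ∀ Q ∈ D, ∀ x ∈ Q, ∃ Q' ∈ D, x ∈ Q' ∧ Q' ⊆ Q ∧ parent Q' = Q)
    (ε : ℝ) (hε : 0 < ε) (hε1 : ε ≤ 1)
    (hratio : ∀ Q ∈ D, ENNReal.ofReal ε * μ (parent Q) ≤ μ Q)
    (a : ℝ) (ha : 2 / ε < a)
    (f : X → ℝ) (hf : Measurable f) (hfint : ∀ Q ∈ D, IntegrableOn f Q μ)
    (avg : Set X → ℝ)
    (havg : ∀ Q : Set X, avg Q = ((μ Q).toReal)⁻¹ * ∫ x in Q, |f x| ∂μ)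
    (hdecay : ∀ c : ℝ, 0 < c → ∃ M : ℝ, ∀ Q ∈ D, M < (μ Q).toReal → avg Q ≤ c)
    (𝒬 : ℤ → Set (Set X)) (h𝒬D : ∀ k, 𝒬 k ⊆ D)
    (hmax1 : ∀ k : ℤ, ∀ Q ∈ 𝒬 k, a ^ k < avg Q)
    (hmax2 : ∀ k : ℤ, ∀ Q ∈ 𝒬 k, ∀ Q' ∈ D, Q ⊂ Q' → avg Q' ≤ a ^ k)
    (Ω : ℤ → Set X) (hΩ : ∀ k, Ω k = ⋃ Q ∈ 𝒬 k, Q)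
    (hΩeq : ∀ k : ℤ, Ω k = {x | ∃ Q ∈ D, x ∈ Q ∧ a ^ k < avg Q}) :
    (∀ k : ℤ, ∀ Q ∈ 𝒬 k, μ Q ≤ 2 * μ (Q \ Ω (k + 1))) ∧
      (∀ k k' : ℤ, ∀ Q ∈ 𝒬 k, ∀ Q' ∈ 𝒬 k', (k ≠ k' ∨ Q ≠ Q') →
        (Q \ Ω (k + 1)) ∩ (Q' \ Ω (k' + 1)) = ∅) :=
  CZ_cubes_sparse_general μ D hDc hDm hDfin hnest parent hparent ε hε hε1 hratio a ha f hfint avg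
    havg 𝒬 h𝒬D hmax1 hmax2 Ω hΩ hΩeq
end

section
/- Let Φ(t) = t log(e+t)^ε with ε > 0, set q = 1 + ε/2 and A_Φ(t) = Φ(t^q) = t^q log(e+t^q)^ε. Let D be a dyadic grid and u a weight with M_Φ^D u finite a.e. Then the pair (u, M_Φ^D u) satisfies [[u, M_Φ^D u]]_{A_Φ, B, q}^D := sup_{Q∈D} ‖u^{1/q}‖_{A_Φ,Q} ‖(M_Φ^D u)^{-1/q}‖_{B,Q} ≤ 1, where B(t) = t^{(rq)'} for any fixed 1/q < r < 1. -/
open MeasureTheory Real Set Filter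

/-- The dyadic Orlicz maximal operator `M_Φ^D g (x) = sup_{x ∈ Q ∈ D} ‖g‖_{Φ,Q}`. -/
noncomputable def dyadicOrliczMax {X : Type*} [MeasurableSpace X] (μ : Measure X)
    (D : Set (Set X)) (Φ : ℝ → ℝ) (g : X → ℝ) (x : X) : ℝ :=
  sSup {r : ℝ | ∃ Q ∈ D, x ∈ Q ∧ r = luxNorm μ Φ Q g}

/-- For `Φ(t) = t log(e+t)^ε`, `q = 1 + ε/2`, `A_Φ(t) = Φ(t^q)`, and `B(t) = t^{(rq)'}`
with `1/q < r < 1`, the pair `(u, M_Φ^D u)` satisfies the dyadic bump estimate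
`sup_{Q ∈ D} ‖u^{1/q}‖_{A_Φ,Q} ‖(M_Φ^D u)^{-1/q}‖_{B,Q} ≤ 1`. -/
theorem bump_weight_maximal_pair {X : Type*} [MeasurableSpace X] (μ : Measure X)
    (D : Set (Set X)) (hDm : ∀ Q ∈ D, MeasurableSet Q)
    (hDfin : ∀ Q ∈ D, 0 < μ Q ∧ μ Q < ⊤)
    (ε : ℝ) (hε : 0 < ε)
    (Φ : ℝ → ℝ) (hΦ : ∀ t : ℝ, 0 ≤ t → Φ t = t * Real.log (Real.exp 1 + t) ^ ε)
    (q : ℝ) (hq : q = 1 + ε / 2)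
    (AΦ : ℝ → ℝ) (hAΦ : ∀ t : ℝ, 0 ≤ t → AΦ t = Φ (t ^ q))
    (r : ℝ) (hr1 : 1 / q < r) (hr2 : r < 1)
    (B : ℝ → ℝ) (hB : ∀ t : ℝ, 0 ≤ t → B t = t ^ ((r * q) / (r * q - 1)))
    (u : X → ℝ) (hu : Measurable u) (hu0 : ∀ x, 0 ≤ u x)
    (hupos : ∀ Q ∈ D, 0 < luxNorm μ Φ Q u)
    -- `M_Φ^D u` is finite a.e.
    (hfin : ∀ᵐ x ∂μ, BddAbove {s : ℝ | ∃ Q ∈ D, x ∈ Q ∧ s = luxNorm μ Φ Q u}) :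
    ∀ Q ∈ D,
      luxNorm μ AΦ Q (fun x => u x ^ (1 / q)) *
        luxNorm μ B Q (fun x => dyadicOrliczMax μ D Φ u x ^ (-(1 / q))) ≤ 1 := by
  intro Q hQ
  have hq1 : (1:ℝ) < q := by rw [hq]; linarith
  have hq0 : (0:ℝ) < q := by linarith
  have hqne : q ≠ 0 := ne_of_gt hq0
  set m : ℝ := luxNorm μ Φ Q u with hm_def
  have hm : 0 < m := hupos Q hQ
  set S : Set ℝ :=
    {l : ℝ | 0 < l ∧ ∫⁻ x in Q, ENNReal.ofReal (Φ (|u x| / l)) ∂μ ≤ μ Q} with hS_def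
  have hmS : m = sInf S := rfl
  have hSbdd : BddBelow S := ⟨0, fun l hl => le_of_lt hl.1⟩
  have hSne : S.Nonempty := by
    by_contra h
    rw [Set.not_nonempty_iff_eq_empty] at h
    rw [hmS, h, Real.sInf_empty] at hm
    exact lt_irrefl 0 hm
  have hrq : 1 < r * q := by
    have := (div_lt_iff₀ hq0).mp hr1
    linarith
  have hp0 : 0 ≤ (r * q) / (r * q - 1) := div_nonneg (by linarith) (by linarith)
  set Mu := fun x => dyadicOrliczMax μ D Φ u x with hMu_def
  -- a.e. lower bound for the maximal function on Q
  have hMae : ∀ᵐ x ∂μ, x ∈ Q → m ≤ Mu x := by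
    filter_upwards [hfin] with x hx hxQ
    exact le_csSup hx ⟨Q, hQ, hxQ, rfl⟩
  set a := luxNorm μ AΦ Q (fun x => u x ^ (1 / q)) with ha_def
  set b := luxNorm μ B Q (fun x => Mu x ^ (-(1 / q))) with hb_def
  have ha0 : 0 ≤ a := Real.sInf_nonneg (fun l hl => le_of_lt hl.1)
  have hb0 : 0 ≤ b := Real.sInf_nonneg (fun l hl => le_of_lt hl.1)
  -- Fact B : b ≤ m ^ (-(1/q))
  have hbB : b ≤ m ^ (-(1 / q)) := by
    apply csInf_le ⟨0, fun l hl => le_of_lt hl.1⟩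
    constructor
    · exact Real.rpow_pos_of_pos hm _
    · calc ∫⁻ x in Q, ENNReal.ofReal (B (|Mu x ^ (-(1 / q))| / m ^ (-(1 / q)))) ∂μ
          ≤ ∫⁻ _x in Q, 1 ∂μ := by
            apply lintegral_mono_ae
            filter_upwards [ae_restrict_of_ae hMae, ae_restrict_mem (hDm Q hQ)]
              with x hx hxQ
            have hMx : 0 < Mu x := lt_of_lt_of_le hm (hx hxQ)
            have h1 : Mu x ^ (-(1 / q)) ≤ m ^ (-(1 / q)) :=
              Real.rpow_le_rpow_of_nonpos hm (hx hxQ) (neg_nonpos.mpr (by positivity))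
            have h2 : |Mu x ^ (-(1 / q))| = Mu x ^ (-(1 / q)) :=
              abs_of_nonneg (Real.rpow_nonneg hMx.le _)
            have hratio0 : 0 ≤ Mu x ^ (-(1 / q)) / m ^ (-(1 / q)) :=
              div_nonneg (Real.rpow_nonneg hMx.le _) (Real.rpow_nonneg hm.le _)
            have hratio1 : Mu x ^ (-(1 / q)) / m ^ (-(1 / q)) ≤ 1 :=
              (div_le_one (Real.rpow_pos_of_pos hm _)).mpr h1
            rw [h2, hB _ hratio0]
            exact ENNReal.ofReal_le_one.mpr (Real.rpow_le_one hratio0 hratio1 hp0)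
        _ = μ Q := by simp
  -- Fact A : a ≤ l ^ (1/q) for every l ∈ S
  have haA : ∀ l ∈ S, a ≤ l ^ (1 / q) := by
    intro l hl
    apply csInf_le ⟨0, fun l' hl' => le_of_lt hl'.1⟩
    constructor
    · exact Real.rpow_pos_of_pos hl.1 _
    · have key : ∀ x, AΦ (|u x ^ (1 / q)| / l ^ (1 / q)) = Φ (|u x| / l) := by
        intro x
        have hux := hu0 x
        have h1 : |u x ^ (1 / q)| = u x ^ (1 / q) :=
          abs_of_nonneg (Real.rpow_nonneg hux _)
        have hdiv : (0:ℝ) ≤ u x / l := div_nonneg hux hl.1.le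
        have h2 : u x ^ (1 / q) / l ^ (1 / q) = (u x / l) ^ (1 / q) :=
          (Real.div_rpow hux hl.1.le _).symm
        rw [h1, h2, hAΦ _ (Real.rpow_nonneg hdiv _), ← Real.rpow_mul hdiv,
          one_div, inv_mul_cancel₀ hqne, Real.rpow_one, abs_of_nonneg hux]
      calc ∫⁻ x in Q, ENNReal.ofReal (AΦ (|u x ^ (1 / q)| / l ^ (1 / q))) ∂μ
          = ∫⁻ x in Q, ENNReal.ofReal (Φ (|u x| / l)) ∂μ := by
            apply lintegral_congr
            intro x
            rw [key x]
        _ ≤ μ Q := hl.2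
  -- combine
  have hkey : (a * b) ^ q * m ≤ m := by
    rw [hmS]
    apply le_csInf hSne
    intro l hl
    have h1 : (a * b) ^ q ≤ l * m⁻¹ := by
      have hmul : a * b ≤ l ^ (1 / q) * m ^ (-(1 / q)) :=
        mul_le_mul (haA l hl) hbB hb0 (Real.rpow_nonneg hl.1.le _)
      calc (a * b) ^ q ≤ (l ^ (1 / q) * m ^ (-(1 / q))) ^ q :=
            Real.rpow_le_rpow (mul_nonneg ha0 hb0) hmul hq0.le
        _ = l * m⁻¹ := by
            rw [Real.mul_rpow (Real.rpow_nonneg hl.1.le _) (Real.rpow_nonneg hm.le _),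
              ← Real.rpow_mul hl.1.le, ← Real.rpow_mul hm.le, one_div,
              inv_mul_cancel₀ hqne, neg_mul, inv_mul_cancel₀ hqne, Real.rpow_one,
              Real.rpow_neg_one]
    calc (a * b) ^ q * m ≤ l * m⁻¹ * m := mul_le_mul_of_nonneg_right h1 hm.le
      _ = l := by field_simp
  have hq_le_one : (a * b) ^ q ≤ 1 := by nlinarith [hkey, hm]
  by_contra h
  push_neg at h
  have hab : 0 < a * b := lt_trans one_pos h
  have : 1 < (a * b) ^ q :=
    (Real.one_lt_rpow_iff_of_pos hab).mpr (Or.inl ⟨h, hq0⟩)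
  linarith
end

section
/- Let u(x) = Σ_{n≥2} K_n χ_{I_n}(x) and σ(x) = Σ_{n≥2} χ_{J_n}(x) on ℝ, where K_n = n² log(e+n)^{-3}, I_n = (eⁿ + n − 1, eⁿ + n), J_n = (eⁿ, eⁿ + 1), and let Φ(t) = t log(e+t)². Then, with Q_n = (eⁿ, eⁿ + n), the product of normalized Luxemburg norms ‖u‖_{Φ,Q_n} ‖σ‖_{Φ,Q_n} is bounded below by c · log(e+n) for an absolute constant c > 0 and all n ≥ 2; in particular sup over intervals Q of ‖u‖_{Φ,Q}‖σ‖_{Φ,Q} = ∞. -/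
open MeasureTheory Real Set Filter

/-- The weight `u = Σ_{n≥2} n² log(e+n)⁻³ χ_{(eⁿ+n−1, eⁿ+n)}`. -/
noncomputable def exU : ℝ → ℝ := fun x =>
  ∑' n : ℕ, if 2 ≤ n then
    Set.indicator (Set.Ioo (Real.exp n + n - 1) (Real.exp n + n))
      (fun _ => (n : ℝ) ^ 2 / Real.log (Real.exp 1 + n) ^ 3) x
  else 0

/-- The weight `σ = Σ_{n≥2} χ_{(eⁿ, eⁿ+1)}`. -/
noncomputable def exSigma : ℝ → ℝ := fun x =>
  ∑' n : ℕ, if 2 ≤ n then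
    Set.indicator (Set.Ioo (Real.exp n) (Real.exp n + 1)) (fun _ => (1 : ℝ)) x
  else 0

/-- The log-bump `Φ(t) = t log(e+t)²`. -/
noncomputable def exPhi : ℝ → ℝ := fun t => t * Real.log (Real.exp 1 + t) ^ 2

/-!
On `Q_n = (eⁿ, eⁿ + n)` both weights are single bumps of width one: `u = K_n χ_{I_n}` and
`σ = χ_{J_n}`. For a bump `c χ_I` with `|I| = 1` on an interval of length `x`, every
admissible `λ` has `Φ(c/λ) ≤ x`, so `λ ≥ c/t` as soon as `Φ(t) > x`, and
`t = 9x / log(e+x)²` works. Hence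
`‖u‖_{Φ,Q_n} ‖σ‖_{Φ,Q_n} ≥ K_n (log(e+n)² / 9n)² = log(e+n) / 81`.
-/

open Function

theorem setLIntegral_ofReal_comp_eqOn_indicator {X : Type*} [MeasurableSpace X] {μ : Measure X}
    {A : ℝ → ℝ} (hA0 : A 0 = 0) {E I : Set X} (hE : MeasurableSet E) (hI : MeasurableSet I)
    (hIE : I ⊆ E) {v : X → ℝ} {c : ℝ} (hv : EqOn v (I.indicator fun _ => c) E) (l : ℝ) :
    ∫⁻ x in E, ENNReal.ofReal (A (|v x| / l)) ∂μ = ENNReal.ofReal (A (|c| / l)) * μ I := by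
  have hcomp : (fun y : ℝ => ENNReal.ofReal (A (|y| / l))) ∘ I.indicator (fun _ => c) =
      I.indicator fun _ => ENNReal.ofReal (A (|c| / l)) :=
    (indicator_comp_of_zero (g := fun y : ℝ => ENNReal.ofReal (A (|y| / l))) (by simp [hA0])).symm
  have hcongr : EqOn (fun x => ENNReal.ofReal (A (|v x| / l)))
      (I.indicator fun _ => ENNReal.ofReal (A (|c| / l))) E := fun x hx => by
    rw [← hcomp, comp_apply, ← hv hx]
  rw [setLIntegral_congr_fun hE hcongr, lintegral_indicator hI, setLIntegral_const,
    Measure.restrict_apply hI, inter_eq_left.2 hIE]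

theorem div_le_luxNorm_of_eqOn_indicator {X : Type*} [MeasurableSpace X] {μ : Measure X}
    {A : ℝ → ℝ} (hA0 : A 0 = 0) (hA : MonotoneOn A (Ici 0)) {E I : Set X}
    (hE : MeasurableSet E) (hI : MeasurableSet I) (hIE : I ⊆ E) {v : X → ℝ} {c t : ℝ}
    (hv : EqOn v (I.indicator fun _ => c) E) (hc : 0 ≤ c) (ht : 0 < t)
    (hμ : μ E < ENNReal.ofReal (A t) * μ I)
    (hne : ∃ l > 0, ENNReal.ofReal (A (c / l)) * μ I ≤ μ E) :
    c / t ≤ luxNorm μ A E v := by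
  have hmod (l : ℝ) : ∫⁻ x in E, ENNReal.ofReal (A (|v x| / l)) ∂μ =
      ENNReal.ofReal (A (c / l)) * μ I := by
    rw [setLIntegral_ofReal_comp_eqOn_indicator hA0 hE hI hIE hv, abs_of_nonneg hc]
  refine le_csInf ?_ ?_
  · obtain ⟨l, hl, hle⟩ := hne
    exact ⟨l, hl, (hmod l).trans_le hle⟩
  · rintro l ⟨hl, hle⟩
    by_contra! hlt
    have htl : t < c / l := by rwa [lt_div_iff₀ hl, mul_comm, ← lt_div_iff₀ ht]
    have hAt : A t ≤ A (c / l) := hA ht.le (div_nonneg hc hl.le) htl.le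
    rw [hmod] at hle
    exact hμ.not_ge (le_trans (by gcongr) hle)

theorem exPhi_zero : exPhi 0 = 0 := by simp [exPhi]

theorem exPhi_monotoneOn : MonotoneOn exPhi (Ici 0) := by
  intro a ha b hb hab
  have hlog₀ : 0 ≤ log (exp 1 + a) := log_nonneg (by linarith [add_one_le_exp 1, mem_Ici.1 ha])
  have hlog : log (exp 1 + a) ≤ log (exp 1 + b) :=
    log_le_log (by linarith [exp_pos 1, mem_Ici.1 ha]) (by linarith)
  exact mul_le_mul hab (pow_le_pow_left₀ hlog₀ hlog 2) (by positivity) hb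

theorem exPhi_half_le_two : exPhi (1 / 2) ≤ 2 := by
  have he : exp 1 + 1 / 2 ≤ exp 2 := by
    rw [show (2 : ℝ) = 1 + 1 by norm_num, exp_add]
    nlinarith [add_one_le_exp 1]
  have hlog : log (exp 1 + 1 / 2) ≤ 2 := (log_le_log (by positivity) he).trans_eq (log_exp 2)
  have hlog₀ : 0 ≤ log (exp 1 + 1 / 2) := log_nonneg (by linarith [add_one_le_exp 1])
  unfold exPhi
  nlinarith

theorem lt_exPhi {x : ℝ} (hx : 0 < x) : x < exPhi (9 * x / log (exp 1 + x) ^ 2) := by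
  set L := log (exp 1 + x)
  set s := exp (L / 3)
  have hL : 0 < L := log_pos (by linarith [add_one_le_exp 1])
  have hs3 : s ^ 3 = exp 1 + x := by
    rw [← exp_nat_mul, Nat.cast_ofNat, mul_div_cancel₀ L three_ne_zero, exp_log (by positivity)]
  have hLs : L / 3 < s := by linarith [add_one_le_exp (L / 3)]
  have hs1 : 1 ≤ s := one_le_exp (by positivity)
  -- `9x / L² > x / s²`, and `e + x / s² ≥ s` because `s³ = e + x ≤ e s² + x`.
  have hts : s < exp 1 + 9 * x / L ^ 2 := by
    have hxs : x / s ^ 2 < 9 * x / L ^ 2 := by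
      have hL2 : L ^ 2 < 9 * s ^ 2 := by nlinarith
      rw [div_lt_div_iff₀ (by positivity) (by positivity)]
      nlinarith [mul_lt_mul_of_pos_left hL2 hx]
    have hs : s ≤ exp 1 + x / s ^ 2 := by
      rw [← sub_le_iff_le_add', le_div_iff₀ (by positivity)]
      nlinarith [mul_le_mul_of_nonneg_left (one_le_pow₀ hs1 : 1 ≤ s ^ 2) (exp_pos 1).le]
    linarith
  have hlog : L / 3 < log (exp 1 + 9 * x / L ^ 2) :=
    (lt_log_iff_exp_lt (by positivity)).2 hts
  calc x = 9 * x / L ^ 2 * (L / 3) ^ 2 := by field_simp; ring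
    _ < 9 * x / L ^ 2 * log (exp 1 + 9 * x / L ^ 2) ^ 2 := by gcongr

theorem le_luxNorm_exPhi_of_eqOn_indicator {b x p q c : ℝ} (hx : 2 ≤ x) (hpq : q - p = 1)
    (hsub : Ioo p q ⊆ Ioo b (b + x)) (hc : 0 < c) {v : ℝ → ℝ}
    (hv : EqOn v ((Ioo p q).indicator fun _ => c) (Ioo b (b + x))) :
    c * log (exp 1 + x) ^ 2 / (9 * x) ≤ luxNorm volume exPhi (Ioo b (b + x)) v := by
  have hL : 0 < log (exp 1 + x) := log_pos (by linarith [add_one_le_exp 1])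
  have hvol : volume (Ioo p q) = 1 := by rw [volume_Ioo, hpq, ENNReal.ofReal_one]
  have hvolQ : volume (Ioo b (b + x)) = ENNReal.ofReal x := by rw [volume_Ioo, add_sub_cancel_left]
  convert div_le_luxNorm_of_eqOn_indicator exPhi_zero exPhi_monotoneOn measurableSet_Ioo
    measurableSet_Ioo hsub hv hc.le (t := 9 * x / log (exp 1 + x) ^ 2)
    (div_pos (by linarith) (pow_pos hL 2)) ?_ ?_ using 1
  · field_simp
  · rw [hvol, hvolQ, mul_one]
    exact (ENNReal.ofReal_lt_ofReal_iff_of_nonneg (by linarith)).2 (lt_exPhi (by linarith))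
  · refine ⟨2 * c, by positivity, ?_⟩
    rw [hvol, hvolQ, mul_one, show c / (2 * c) = 1 / 2 by field_simp]
    exact ENNReal.ofReal_le_ofReal (exPhi_half_le_two.trans hx)

theorem exp_add_le_exp {a b : ℝ} (hab : a + 1 ≤ b) : exp a + a ≤ exp b := by
  have h : exp (a + 1) ≤ exp b := exp_le_exp.2 hab
  rw [exp_add] at h
  nlinarith [add_one_le_exp a, add_one_le_exp 1, exp_pos a]

theorem pairwise_disjoint_Ioo_exp :
    Pairwise (Disjoint on fun m : ℕ => Ioo (exp m) (exp m + m)) := by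
  refine (pairwise_disjoint_on _).2 fun m k hmk => ?_
  have hle : exp m + m ≤ exp k := exp_add_le_exp (by exact_mod_cast hmk)
  exact (Ioi_disjoint_Iio_of_le hle).symm.mono Ioo_subset_Iio_self Ioo_subset_Ioi_self

theorem tsum_eq_of_mem_of_pairwise_disjoint {ι α : Type*} {f : ι → ℝ} {s : ι → Set α}
    (hs : Pairwise (Disjoint on s)) {x : α} (hf : ∀ j, x ∉ s j → f j = 0) {i : ι}
    (hx : x ∈ s i) : ∑' j, f j = f i :=
  tsum_eq_single i fun j hji => hf j fun hxj => (hs hji).ne_of_mem hxj hx rfl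

theorem exU_eqOn {n : ℕ} (hn : 2 ≤ n) :
    EqOn exU ((Ioo (exp n + n - 1) (exp n + n)).indicator
      fun _ => (n : ℝ) ^ 2 / log (exp 1 + n) ^ 3) (Ioo (exp n) (exp n + n)) := by
  intro x hx
  rw [exU, tsum_eq_of_mem_of_pairwise_disjoint pairwise_disjoint_Ioo_exp ?_ hx, if_pos hn]
  intro m hxm
  split_ifs with hm
  · have hm1 : (1 : ℝ) ≤ m := by exact_mod_cast (by omega : 1 ≤ m)
    exact indicator_of_notMem (fun hxm' => hxm ⟨by linarith [hxm'.1], hxm'.2⟩) _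
  · rfl

theorem exSigma_eqOn {n : ℕ} (hn : 2 ≤ n) :
    EqOn exSigma ((Ioo (exp n) (exp n + 1)).indicator fun _ => (1 : ℝ))
      (Ioo (exp n) (exp n + n)) := by
  intro x hx
  rw [exSigma, tsum_eq_of_mem_of_pairwise_disjoint pairwise_disjoint_Ioo_exp ?_ hx, if_pos hn]
  intro m hxm
  split_ifs with hm
  · have hm1 : (1 : ℝ) ≤ m := by exact_mod_cast (by omega : 1 ≤ m)
    exact indicator_of_notMem (fun hxm' => hxm ⟨hxm'.1, by linarith [hxm'.2]⟩) _
  · rfl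

theorem log_div_le_luxNorm_exU_mul_luxNorm_exSigma {n : ℕ} (hn : 2 ≤ n) :
    log (exp 1 + n) / 81 ≤
      luxNorm volume exPhi (Ioo (exp n) (exp n + n)) exU *
        luxNorm volume exPhi (Ioo (exp n) (exp n + n)) exSigma := by
  set L := log (exp 1 + n)
  have hn2 : (2 : ℝ) ≤ n := by exact_mod_cast hn
  have hL : 0 < L := log_pos (by linarith [add_one_le_exp 1])
  have hu := le_luxNorm_exPhi_of_eqOn_indicator hn2 (by ring)
    (Ioo_subset_Ioo (by linarith) le_rfl) (by positivity) (exU_eqOn hn)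
  have hσ := le_luxNorm_exPhi_of_eqOn_indicator hn2 (by ring)
    (Ioo_subset_Ioo le_rfl (by linarith)) one_pos (exSigma_eqOn hn)
  calc L / 81 = (n ^ 2 / L ^ 3 * L ^ 2 / (9 * n)) * (1 * L ^ 2 / (9 * n)) := by
        field_simp; ring
    _ ≤ _ := mul_le_mul hu hσ (by positivity) ((by positivity : (0 : ℝ) ≤ _).trans hu)

/-- For the pair `(u, σ)`, the double bump quantity over `Q_n = (eⁿ, eⁿ+n)` blows up:
`‖u‖_{Φ,Q_n} ‖σ‖_{Φ,Q_n} ≥ c log(e+n)`; in particular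
`sup_Q ‖u‖_{Φ,Q} ‖σ‖_{Φ,Q} = ∞` over all intervals `Q`. -/
theorem double_bump_fails :
    (∃ c : ℝ, 0 < c ∧ ∀ n : ℕ, 2 ≤ n →
      c * Real.log (Real.exp 1 + n) ≤
        luxNorm volume exPhi (Set.Ioo (Real.exp n) (Real.exp n + n)) exU *
          luxNorm volume exPhi (Set.Ioo (Real.exp n) (Real.exp n + n)) exSigma) ∧
      (∀ M : ℝ, ∃ a b : ℝ, a < b ∧
        M < luxNorm volume exPhi (Set.Ioo a b) exU *
              luxNorm volume exPhi (Set.Ioo a b) exSigma) := by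
  refine ⟨⟨1 / 81, by norm_num, fun n hn => ?_⟩, fun M => ?_⟩
  · rw [one_div_mul_eq_div]
    exact log_div_le_luxNorm_exU_mul_luxNorm_exSigma hn
  · have hlog : Tendsto (fun n : ℕ => log (exp 1 + n) / 81) atTop atTop :=
      (tendsto_log_atTop.comp (tendsto_atTop_add_const_left _ _
        tendsto_natCast_atTop_atTop)).atTop_div_const (by norm_num)
    obtain ⟨n, hn, hM⟩ := ((eventually_ge_atTop 2).and (hlog.eventually_gt_atTop M)).exists
    exact ⟨exp n, exp n + n, lt_add_of_pos_right _ (by exact_mod_cast (by omega : 0 < n)),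
      hM.trans_le (log_div_le_luxNorm_exU_mul_luxNorm_exSigma hn)⟩
end

section
/- For 1 < p < ∞ and δ > 0, let A(t) = t^p log(e+t)^{p−1+δ}, and for 0 < ε < δ/p let Φ(t) = t log(e+t)^ε and C(t) = t^{p'} log(e+t)^{−1−(p'−1)η} with η = δ − εp. Then there is a constant c₀ = c₀(p, δ, ε) such that A^{-1}(t) C^{-1}(t) ≤ c₀ Φ^{-1}(t) for all t > 0, where F^{-1}(t) = inf{s ≥ 0 : F(s) > t} denotes the generalized inverse. -/
open MeasureTheory Real Set Filter

/-- The generalized inverse `F⁻¹(t) = inf {s ≥ 0 : F(s) > t}`. -/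
noncomputable def geninv (F : ℝ → ℝ) (t : ℝ) : ℝ :=
  sInf {s : ℝ | 0 ≤ s ∧ t < F s}

/-! Write `L t = log (e + t)`. Each of `A`, `C`, `Φ` has the form `s ^ a * L s ^ b`, whose
generalized inverse is comparable to `G t = t ^ (1/a) * L t ^ (-b/a)`. The reason is that `L` is
slowly varying: `L (G t)` is comparable to `L t` (powers only rescale `L`, and powers of `L` are
eventually dominated by any power of `t`), so `F (G u)` is comparable to `u`; and `G (K t)` is at
most a constant times `G t`. Multiplying the bounds for `A⁻¹` and `C⁻¹`, the exponents of `t`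
add up to `1/p + 1/p' = 1` and those of `L` to `-ε`, which is the size of `Φ⁻¹`. -/

noncomputable def logE (t : ℝ) : ℝ := log (exp 1 + t)

noncomputable def powLog (a b t : ℝ) : ℝ := t ^ a * logE t ^ b

theorem one_le_logE {t : ℝ} (ht : 0 ≤ t) : 1 ≤ logE t := by
  simpa [logE] using log_le_log (exp_pos 1) (le_add_of_nonneg_right ht)

theorem logE_pos {t : ℝ} (ht : 0 ≤ t) : 0 < logE t :=
  one_pos.trans_le (one_le_logE ht)

theorem logE_le_logE {s t : ℝ} (hs : 0 ≤ s) (hst : s ≤ t) : logE s ≤ logE t :=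
  log_le_log (by positivity) (by linarith)

theorem powLog_nonneg (a b : ℝ) {t : ℝ} (ht : 0 ≤ t) : 0 ≤ powLog a b t :=
  mul_nonneg (rpow_nonneg ht a) (rpow_nonneg (logE_pos ht).le b)

theorem powLog_le_powLog {a b s t : ℝ} (ha : 0 ≤ a) (hb : 0 ≤ b) (hs : 0 ≤ s)
    (hst : s ≤ t) :
    powLog a b s ≤ powLog a b t :=
  mul_le_mul (rpow_le_rpow hs hst ha) (rpow_le_rpow (logE_pos hs).le (logE_le_logE hs hst) hb)
    (rpow_nonneg (logE_pos hs).le b) (rpow_nonneg (hs.trans hst) a)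

theorem powLog_mul_powLog (a b a' b' : ℝ) {t : ℝ} (ht : 0 < t) :
    powLog a b t * powLog a' b' t = powLog (a + a') (b + b') t := by
  simp only [powLog, rpow_add ht, rpow_add (logE_pos ht.le)]
  ring

theorem logE_mul_le {x y : ℝ} (hx : 0 ≤ x) (hy : 0 ≤ y) :
    logE (x * y) ≤ logE x + logE y := by
  rw [logE, logE, logE, ← log_mul (by positivity) (by positivity)]
  apply log_le_log (by positivity)
  nlinarith [add_one_le_exp 1]

theorem logE_rpow_le {x s : ℝ} (hx : 0 ≤ x) (hs : 0 ≤ s) :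
    logE (x ^ s) ≤ (s + 2) * logE x := by
  have hex : 1 ≤ exp 1 + x := by linarith [add_one_le_exp 1]
  rw [logE, logE, ← log_rpow (by positivity)]
  apply log_le_log (by positivity)
  have h₁ : x ^ s ≤ (exp 1 + x) ^ s := rpow_le_rpow hx (by linarith [exp_pos 1]) hs
  have h₂ : 1 ≤ (exp 1 + x) ^ s := one_le_rpow hex hs
  have h₃ : exp 1 + 1 ≤ (exp 1 + x) ^ (2 : ℝ) := by
    rw [rpow_two]; nlinarith [exp_one_gt_d9]
  rw [rpow_add (by linarith)]
  nlinarith [mul_le_mul_of_nonneg_left h₃ (zero_le_one.trans h₂),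
    mul_le_mul_of_nonneg_left h₂ (exp_pos 1).le]

theorem logE_logE_le {t : ℝ} (ht : 0 ≤ t) : logE (logE t) ≤ 2 * logE t := by
  have hL : logE t ≤ exp 1 + t - 1 := log_le_sub_one_of_pos (by positivity)
  have h : logE (logE t) ≤ log (exp 1 * (exp 1 + t)) := by
    apply log_le_log (by linarith [exp_pos 1, logE_pos ht])
    nlinarith [add_one_le_exp 1]
  rw [log_mul (exp_pos 1).ne' (by positivity), log_exp, ← logE] at h
  linarith [one_le_logE ht]

theorem rpow_le_rpow_abs_mul_rpow {x y M : ℝ} (hx : 0 < x) (hy : 0 < y) (hxy : x ≤ M * y)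
    (hyx : y ≤ M * x) (b : ℝ) : x ^ b ≤ M ^ |b| * y ^ b := by
  have hM : 0 < M := pos_of_mul_pos_left (hx.trans_le hxy) hy.le
  rcases le_total 0 b with hb | hb
  · rw [abs_of_nonneg hb, ← mul_rpow hM.le hy.le]
    exact rpow_le_rpow hx.le hxy hb
  · have h := rpow_le_rpow hy.le hyx (neg_nonneg.2 hb)
    rw [mul_rpow hM.le hx.le, rpow_neg hy.le, rpow_neg hx.le] at h
    rw [abs_of_nonpos hb]
    rw [inv_le_iff_one_le_mul₀ (rpow_pos_of_pos hy b)] at h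
    calc x ^ b = x ^ b * 1 := (mul_one _).symm
      _ ≤ x ^ b * (M ^ (-b) * (x ^ b)⁻¹ * y ^ b) := by gcongr
      _ = M ^ (-b) * y ^ b := by field_simp

theorem eventually_logE_rpow_le (β : ℝ) {s : ℝ} (hs : 0 < s) :
    ∀ᶠ t in atTop, logE t ^ β ≤ t ^ s := by
  have hshift : Tendsto (fun t : ℝ => exp 1 + t) atTop atTop :=
    tendsto_atTop_add_const_left _ _ tendsto_id
  have hlittle := (isLittleO_log_rpow_rpow_atTop β hs).comp_tendsto hshift
  have hbig : (fun t : ℝ => (exp 1 + t) ^ s) =O[atTop] fun t => t ^ s := by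
    refine Asymptotics.IsBigO.of_bound (2 ^ s) ?_
    filter_upwards [eventually_ge_atTop (exp 1)] with t ht
    have ht0 : 0 ≤ t := (exp_pos 1).le.trans ht
    rw [norm_of_nonneg (by positivity), norm_of_nonneg (by positivity),
      ← mul_rpow (by norm_num) ht0]
    exact rpow_le_rpow (by positivity) (by linarith) hs.le
  filter_upwards [(hlittle.trans_isBigO hbig).eventuallyLE, eventually_ge_atTop 0] with t h ht
  exact (le_abs_self _).trans (h.trans (abs_of_nonneg (rpow_nonneg ht s)).le)

theorem exists_logE_powLog_le (r γ : ℝ) (hr : 0 ≤ r) :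
    ∃ M, ∀ t, 0 ≤ t → logE (powLog r γ t) ≤ M * logE t := by
  refine ⟨r + 2 + 2 * (|γ| + 2), fun t ht => ?_⟩
  have hL := logE_pos ht
  have hγ : logE t ^ γ ≤ logE t ^ |γ| :=
    rpow_le_rpow_of_exponent_le (one_le_logE ht) (le_abs_self γ)
  calc logE (powLog r γ t) ≤ logE (t ^ r) + logE (logE t ^ γ) :=
        logE_mul_le (rpow_nonneg ht r) (rpow_nonneg hL.le γ)
    _ ≤ (r + 2) * logE t + (|γ| + 2) * logE (logE t) := by
        gcongr
        · exact logE_rpow_le ht hr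
        · exact (logE_le_logE (rpow_nonneg hL.le γ) hγ).trans
            (logE_rpow_le hL.le (abs_nonneg γ))
    _ ≤ (r + 2) * logE t + (|γ| + 2) * (2 * logE t) := by
        gcongr
        exact logE_logE_le ht
    _ = (r + 2 + 2 * (|γ| + 2)) * logE t := by ring

theorem exists_logE_le_logE_powLog (r γ : ℝ) (hr : 0 < r) :
    ∃ M, ∀ t, 0 ≤ t → logE t ≤ M * logE (powLog r γ t) := by
  obtain ⟨T, hT⟩ := eventually_atTop.1 (eventually_logE_rpow_le (-γ) (half_pos hr))
  refine ⟨max (logE (max T 0)) (2 / r + 2), fun t ht => ?_⟩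
  have hG := one_le_logE (powLog_nonneg r γ ht)
  rcases le_total t T with htT | hTt
  · calc logE t ≤ logE (max T 0) := logE_le_logE ht (htT.trans (le_max_left T 0))
      _ ≤ max (logE (max T 0)) (2 / r + 2) * 1 := by rw [mul_one]; exact le_max_left _ _
      _ ≤ _ := by gcongr
  · have hL := logE_pos ht
    have hpow : t ^ (r / 2) ≤ powLog r γ t := by
      have hinv : logE t ^ (-γ) * logE t ^ γ = 1 := by
        rw [← rpow_add hL, neg_add_cancel, rpow_zero]
      calc t ^ (r / 2) = t ^ (r / 2) * (logE t ^ (-γ) * logE t ^ γ) := by rw [hinv, mul_one]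
        _ ≤ t ^ (r / 2) * (t ^ (r / 2) * logE t ^ γ) := by gcongr; exact hT t hTt
        _ = powLog r γ t := by
          rw [powLog, ← mul_assoc, ← rpow_add_of_nonneg ht (by positivity) (by positivity)]
          ring_nf
    calc logE t = logE ((t ^ (r / 2)) ^ (2 / r)) := by
          rw [← rpow_mul ht, div_mul_div_comm, mul_comm r 2, div_self (by positivity), rpow_one]
      _ ≤ (2 / r + 2) * logE (t ^ (r / 2)) := logE_rpow_le (rpow_nonneg ht _) (by positivity)
      _ ≤ (2 / r + 2) * logE (powLog r γ t) := by
          gcongr; exact logE_le_logE (rpow_nonneg ht _) hpow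
      _ ≤ _ := by gcongr; exact le_max_right _ _

theorem exists_logE_powLog_comparable (r γ : ℝ) (hr : 0 < r) :
    ∃ M, 1 ≤ M ∧ ∀ t, 0 ≤ t →
      logE (powLog r γ t) ≤ M * logE t ∧ logE t ≤ M * logE (powLog r γ t) := by
  obtain ⟨M₁, hM₁⟩ := exists_logE_powLog_le r γ hr.le
  obtain ⟨M₂, hM₂⟩ := exists_logE_le_logE_powLog r γ hr
  refine ⟨max 1 (max M₁ M₂), le_max_left _ _, fun t ht => ⟨?_, ?_⟩⟩
  · exact (hM₁ t ht).trans <| mul_le_mul_of_nonneg_right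
      ((le_max_left _ _).trans (le_max_right _ _)) (logE_pos ht).le
  · exact (hM₂ t ht).trans <| mul_le_mul_of_nonneg_right
      ((le_max_right _ _).trans (le_max_right _ _)) (logE_pos (powLog_nonneg r γ ht)).le

theorem exists_powLog_mul_le (r γ : ℝ) {K : ℝ} (hK : 1 ≤ K) :
    ∃ M, 0 < M ∧ ∀ t, 0 ≤ t → powLog r γ (K * t) ≤ M * powLog r γ t := by
  have hK0 : 0 ≤ K := zero_le_one.trans hK
  have hLK := one_le_logE hK0
  refine ⟨K ^ r * (logE K + 1) ^ |γ|,
    mul_pos (rpow_pos_of_pos (by linarith) r) (rpow_pos_of_pos (by linarith) _), fun t ht => ?_⟩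
  have hL := one_le_logE ht
  have hKt := one_le_logE (mul_nonneg hK0 ht)
  have hup : logE (K * t) ≤ (logE K + 1) * logE t :=
    (logE_mul_le hK0 ht).trans (by nlinarith)
  have hlow : logE t ≤ (logE K + 1) * logE (K * t) :=
    (logE_le_logE ht (le_mul_of_one_le_left ht hK)).trans
      (le_mul_of_one_le_left (by linarith) (by linarith))
  have hγ := rpow_le_rpow_abs_mul_rpow (by linarith) (by linarith) hup hlow γ
  calc powLog r γ (K * t) = K ^ r * (t ^ r * logE (K * t) ^ γ) := by
        rw [powLog, mul_rpow hK0 ht]; ring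
    _ ≤ K ^ r * (t ^ r * ((logE K + 1) ^ |γ| * logE t ^ γ)) := by gcongr
    _ = K ^ r * (logE K + 1) ^ |γ| * powLog r γ t := by rw [powLog]; ring

theorem powLog_powLog_inv (a b : ℝ) (ha : a ≠ 0) {u : ℝ} (hu : 0 ≤ u) :
    powLog a b (powLog a⁻¹ (-b / a) u) =
      u * logE u ^ (-b) * logE (powLog a⁻¹ (-b / a) u) ^ b := by
  have hL := logE_pos hu
  conv_lhs => rw [powLog]
  rw [powLog, mul_rpow (rpow_nonneg hu _) (rpow_nonneg hL.le _), ← rpow_mul hu,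
    ← rpow_mul hL.le, inv_mul_cancel₀ ha, div_mul_cancel₀ _ ha, rpow_one]

theorem exists_powLog_powLog_inv_bounds (a b : ℝ) (ha : 0 < a) :
    ∃ κ, 1 ≤ κ ∧ ∀ u, 0 ≤ u →
      u ≤ κ * powLog a b (powLog a⁻¹ (-b / a) u) ∧
        powLog a b (powLog a⁻¹ (-b / a) u) ≤ κ * u := by
  obtain ⟨M, hM, hcomp⟩ := exists_logE_powLog_comparable a⁻¹ (-b / a) (inv_pos.2 ha)
  refine ⟨M ^ |b|, one_le_rpow hM (abs_nonneg b), fun u hu => ?_⟩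
  obtain ⟨hup, hlow⟩ := hcomp u hu
  have hL := logE_pos hu
  have hLG := logE_pos (powLog_nonneg a⁻¹ (-b / a) hu)
  have hcancel : u * logE u ^ (-b) * logE u ^ b = u := by
    rw [mul_assoc, ← rpow_add hL, neg_add_cancel, rpow_zero, mul_one]
  rw [powLog_powLog_inv a b ha.ne' hu]
  constructor
  · calc u = u * logE u ^ (-b) * logE u ^ b := hcancel.symm
      _ ≤ u * logE u ^ (-b) * (M ^ |b| * logE (powLog a⁻¹ (-b / a) u) ^ b) := by
          gcongr; exact rpow_le_rpow_abs_mul_rpow hL hLG hlow hup b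
      _ = _ := by ring
  · calc _ ≤ u * logE u ^ (-b) * (M ^ |b| * logE u ^ b) := by
          gcongr; exact rpow_le_rpow_abs_mul_rpow hLG hL hup hlow b
      _ = M ^ |b| * (u * logE u ^ (-b) * logE u ^ b) := by ring
      _ = M ^ |b| * u := by rw [hcancel]

theorem geninv_congr {F F' : ℝ → ℝ} (h : ∀ s, 0 ≤ s → F s = F' s) :
    geninv F = geninv F' := by
  funext t
  unfold geninv
  congr 1
  ext s
  exact and_congr_right fun hs => by rw [h s hs]

theorem geninv_nonneg (F : ℝ → ℝ) (t : ℝ) : 0 ≤ geninv F t :=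
  Real.sInf_nonneg fun _ hs => hs.1

theorem geninv_le {F : ℝ → ℝ} {s t : ℝ} (hs : 0 ≤ s) (hts : t < F s) : geninv F t ≤ s :=
  csInf_le ⟨0, fun _ h => h.1⟩ ⟨hs, hts⟩

theorem le_geninv {F : ℝ → ℝ} {s₀ t : ℝ} (hne : ∃ s, 0 ≤ s ∧ t < F s)
    (h : ∀ s, 0 ≤ s → t < F s → s₀ ≤ s) : s₀ ≤ geninv F t :=
  le_csInf hne fun s hs => h s hs.1 hs.2

/- Testing `F` at `G (K * t)` rather than at `K * G t` keeps the constant `K` out of the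
logarithm, so `K` can be chosen after the comparison constant. -/
theorem exists_lt_powLog_powLog_inv (a b : ℝ) (ha : 0 < a) :
    ∃ K, 1 ≤ K ∧ ∀ t, 0 < t → t < powLog a b (powLog a⁻¹ (-b / a) (K * t)) := by
  obtain ⟨κ, hκ, hbounds⟩ := exists_powLog_powLog_inv_bounds a b ha
  refine ⟨2 * κ, by linarith, fun t ht => ?_⟩
  have h := (hbounds (2 * κ * t) (by positivity)).1
  nlinarith

theorem exists_geninv_powLog_le (a b : ℝ) (ha : 0 < a) :
    ∃ c, 0 < c ∧ ∀ t, 0 < t → geninv (powLog a b) t ≤ c * powLog a⁻¹ (-b / a) t := by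
  obtain ⟨K, hK, hlt⟩ := exists_lt_powLog_powLog_inv a b ha
  obtain ⟨c, hc, hdouble⟩ := exists_powLog_mul_le a⁻¹ (-b / a) hK
  exact ⟨c, hc, fun t ht => (geninv_le (powLog_nonneg _ _ (by positivity)) (hlt t ht)).trans
    (hdouble t ht.le)⟩

theorem exists_powLog_le_geninv (a b : ℝ) (ha : 0 < a) (hb : 0 ≤ b) :
    ∃ c, 0 < c ∧ ∀ t, 0 < t → powLog a⁻¹ (-b / a) t ≤ c * geninv (powLog a b) t := by
  obtain ⟨K, hK, hlt⟩ := exists_lt_powLog_powLog_inv a b ha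
  obtain ⟨κ, hκ, hbounds⟩ := exists_powLog_powLog_inv_bounds a b ha
  obtain ⟨c, hc, hdouble⟩ := exists_powLog_mul_le a⁻¹ (-b / a) hκ
  refine ⟨c, hc, fun t ht => ?_⟩
  have hκ0 : 0 < κ := by linarith
  have hinv : powLog a⁻¹ (-b / a) (t / κ) ≤ geninv (powLog a b) t := by
    refine le_geninv ⟨_, powLog_nonneg _ _ (by positivity), hlt t ht⟩ fun s hs hts => ?_
    by_contra! hs'
    have h := powLog_le_powLog ha.le hb hs hs'.le
    have := (hbounds (t / κ) (by positivity)).2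
    rw [mul_div_cancel₀ t hκ0.ne'] at this
    linarith
  calc powLog a⁻¹ (-b / a) t = powLog a⁻¹ (-b / a) (κ * (t / κ)) := by
        rw [mul_div_cancel₀ t hκ0.ne']
    _ ≤ c * powLog a⁻¹ (-b / a) (t / κ) := hdouble _ (by positivity)
    _ ≤ c * geninv (powLog a b) t := by gcongr

theorem inverse_factorization_general (p δ ε : ℝ) (hp : 1 < p)
    (hε : 0 < ε)
    (A Φ C : ℝ → ℝ)
    (hA : ∀ t : ℝ, 0 ≤ t → A t = t ^ p * Real.log (Real.exp 1 + t) ^ (p - 1 + δ))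
    (hΦ : ∀ t : ℝ, 0 ≤ t → Φ t = t * Real.log (Real.exp 1 + t) ^ ε)
    (hC : ∀ t : ℝ, 0 ≤ t → C t =
      t ^ (p / (p - 1)) *
        Real.log (Real.exp 1 + t) ^ (-1 - (p / (p - 1) - 1) * (δ - ε * p))) :
    ∃ c₀ : ℝ, 0 < c₀ ∧ ∀ t : ℝ, 0 < t →
      geninv A t * geninv C t ≤ c₀ * geninv Φ t := by
  have hp1 : p - 1 ≠ 0 := by linarith
  obtain ⟨cA, hcA, hAle⟩ := exists_geninv_powLog_le p (p - 1 + δ) (by linarith)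
  obtain ⟨cC, hcC, hCle⟩ :=
    exists_geninv_powLog_le (p / (p - 1)) (-1 - (p / (p - 1) - 1) * (δ - ε * p))
      (div_pos (by linarith) (by linarith))
  obtain ⟨cΦ, hcΦ, hΦge⟩ := exists_powLog_le_geninv 1 ε one_pos hε.le
  have eA : geninv A = geninv (powLog p (p - 1 + δ)) := geninv_congr hA
  have eC : geninv C = geninv (powLog (p / (p - 1)) (-1 - (p / (p - 1) - 1) * (δ - ε * p))) :=
    geninv_congr hC
  have eΦ : geninv Φ = geninv (powLog 1 ε) :=
    geninv_congr fun s hs => by rw [hΦ s hs, powLog, rpow_one]; rfl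
  rw [eA, eC, eΦ]
  refine ⟨cA * cC * cΦ, by positivity, fun t ht => ?_⟩
  calc _ ≤ _ := mul_le_mul (hAle t ht) (hCle t ht) (geninv_nonneg _ t)
        (mul_nonneg hcA.le (powLog_nonneg _ _ ht.le))
    _ = cA * cC * powLog 1⁻¹ (-ε / 1) t := by
        rw [mul_mul_mul_comm, powLog_mul_powLog _ _ _ _ ht]
        congr 2 <;> field_simp <;> ring
    _ ≤ cA * cC * (cΦ * geninv (powLog 1 ε) t) := by gcongr; exact hΦge t ht
    _ = cA * cC * cΦ * geninv (powLog 1 ε) t := by ring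

/-- The key Young-function inverse factorization: for `A(t) = t^p log(e+t)^{p−1+δ}`,
`Φ(t) = t log(e+t)^ε`, `C(t) = t^{p'} log(e+t)^{−1−(p'−1)η}` with `η = δ − εp` and
`0 < ε < δ/p`, one has `A⁻¹(t) C⁻¹(t) ≤ c₀ Φ⁻¹(t)` for all `t > 0`. -/
theorem inverse_factorization (p δ ε : ℝ) (hp : 1 < p) (hδ : 0 < δ)
    (hε : 0 < ε) (hεδ : ε < δ / p)
    (A Φ C : ℝ → ℝ)
    (hA : ∀ t : ℝ, 0 ≤ t → A t = t ^ p * Real.log (Real.exp 1 + t) ^ (p - 1 + δ))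
    (hΦ : ∀ t : ℝ, 0 ≤ t → Φ t = t * Real.log (Real.exp 1 + t) ^ ε)
    (hC : ∀ t : ℝ, 0 ≤ t → C t =
      t ^ (p / (p - 1)) *
        Real.log (Real.exp 1 + t) ^ (-1 - (p / (p - 1) - 1) * (δ - ε * p))) :
    ∃ c₀ : ℝ, 0 < c₀ ∧ ∀ t : ℝ, 0 < t →
      geninv A t * geninv C t ≤ c₀ * geninv Φ t :=
  inverse_factorization_general p δ ε hp hε A Φ C hA hΦ hC
end
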